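/- arXiv:2104.01442 — 5 statements merged into one kernel-verified Lean document; each statement's English description precedes it below -/
import Mathlib

section
/- Let a > 0 and let c, y satisfy x̲ ≤ c ≤ y ≤ x̄, and suppose the flow π_r x is defined (stays in [x̲, 2x̄]) for all r ∈ [0, a] and x ∈ [c, 2y]. Then for every integrable function f : [c, y] → ℝ one has ∫_c^y f(x) dx = ∫_{S_a(c)}^{S_a(y)} (2 g(π_{−a}(2x)) / g(2x)) · f(π_{−a}(2x)) dx. In other words, the Frobenius–Perron operator of the map S_a (describing the passage from mother initial size to daughter initial size at division age a) is given by P_a f(x) = (2 g(π_{−a}(2x)) / g(2x)) · f(π_{−a}(2x)) on the image interval [S_a(c), S_a(y)]. -/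
/-!
Substitute `x = S_a t`. As `π_{-a}` inverts `π_a`, `t = π_{-a} (2x)`, and the factor
`2 g (π_{-a} (2x)) / g (2x)` is `1 / S_a' t` once we know `(π_b)' t = g (π_b t) / g t`. That formula
comes from the group law: near `t` every point is `π_σ t` with `σ` a local inverse of `s ↦ π_s t`
(whose derivative at `s = 0` is `g t ≠ 0`), so `π_b x = π_{b + σ x} t` and the chain rule applies.
As `S_a' > 0`, the substitution is the monotone one.
-/

open MeasureTheory Topology

structure IsFlow (g : ℝ → ℝ) (fl : ℝ → ℝ → ℝ) : Prop where
  map_zero : ∀ x, fl 0 x = x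
  map_add : ∀ s t x, fl s (fl t x) = fl (s + t) x
  hasDerivAt : ∀ s x, HasDerivAt (fl · x) (g (fl s x)) s

namespace IsFlow

variable {g : ℝ → ℝ} {fl : ℝ → ℝ → ℝ}

theorem neg_apply_apply (hfl : IsFlow g fl) (s x : ℝ) : fl (-s) (fl s x) = x := by
  rw [hfl.map_add, neg_add_cancel, hfl.map_zero]

theorem hasStrictDerivAt_apply_zero (hfl : IsFlow g fl) {x : ℝ} (hgx : ContinuousAt g x) :
    HasStrictDerivAt (fl · x) (g x) 0 := by
  have hcont : ContinuousAt (fun s => g (fl s x)) 0 :=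
    hgx.comp_of_eq (hfl.hasDerivAt 0 x).continuousAt (hfl.map_zero x)
  simpa [hfl.map_zero] using
    hasStrictDerivAt_of_hasDerivAt_of_continuousAt (.of_forall fun s => hfl.hasDerivAt s x) hcont

theorem hasDerivAt_apply (hfl : IsFlow g fl) (b : ℝ) {t : ℝ} (hgc : ContinuousAt g t)
    (hgt : g t ≠ 0) : HasDerivAt (fl b) (g (fl b t) / g t) t := by
  have hγ := hfl.hasStrictDerivAt_apply_zero hgc
  set σ := hγ.localInverse _ _ _ hgt
  have hσ : HasDerivAt σ (g t)⁻¹ t := by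
    simpa [hfl.map_zero] using (hγ.to_localInverse hgt).hasDerivAt
  have hσt : σ t = 0 := by
    simpa [hfl.map_zero] using (hγ.eventually_left_inverse hgt).self_of_nhds
  have hflσ : ∀ᶠ x in 𝓝 t, fl (σ x) t = x := by
    simpa [hfl.map_zero] using hγ.eventually_right_inverse hgt
  have hcomp : HasDerivAt (fun x => fl (b + σ x) t) (g (fl b t) * (g t)⁻¹) t := by
    have hfl_b : HasDerivAt (fl · t) (g (fl b t)) (b + σ t) := by
      simpa [hσt] using hfl.hasDerivAt b t
    exact hfl_b.comp t (hσ.const_add b)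
  refine hcomp.congr_of_eventuallyEq ?_
  filter_upwards [hflσ] with x hx
  conv_lhs => rw [← hx, hfl.map_add]

end IsFlow

theorem frobenius_perron_change_of_variables_general
    (xl xu : ℝ) (hxl : 0 < xl)
    (g : ℝ → ℝ) (hg : ContDiff ℝ 1 g)
    (hgpos : ∀ x ∈ Set.Icc xl (2 * xu), 0 < g x)
    (fl : ℝ → ℝ → ℝ)
    (hfl0 : ∀ x, fl 0 x = x)
    (hfladd : ∀ s t x, fl s (fl t x) = fl (s + t) x)
    (hflderiv : ∀ a x, HasDerivAt (fun s => fl s x) (g (fl a x)) a)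
    (a : ℝ) (ha : 0 < a)
    (c y : ℝ) (hc : xl ≤ c) (hcy : c ≤ y)
    (hdom : ∀ r ∈ Set.Icc (0 : ℝ) a, ∀ x ∈ Set.Icc c (2 * y),
      fl r x ∈ Set.Icc xl (2 * xu))
    (f : ℝ → ℝ) :
    ∫ x in c..y, f x
      = ∫ x in (fl a c / 2)..(fl a y / 2),
          2 * g (fl (-a) (2 * x)) / g (2 * x) * f (fl (-a) (2 * x)) := by
  have hfl : IsFlow g fl := ⟨hfl0, hfladd, hflderiv⟩
  have hg_pos : ∀ t ∈ Set.Icc c y, 0 < g t ∧ 0 < g (fl a t) := by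
    intro t ht
    have ht' : t ∈ Set.Icc c (2 * y) := ⟨ht.1, by linarith [ht.1, ht.2]⟩
    refine ⟨hgpos t ?_, hgpos _ (hdom a ⟨ha.le, le_rfl⟩ t ht')⟩
    simpa [hfl0] using hdom 0 ⟨le_rfl, ha.le⟩ t ht'
  have hderiv : ∀ t ∈ Set.Icc c y, HasDerivAt (fun t => fl a t / 2) (g (fl a t) / g t / 2) t :=
    fun t ht => (hfl.hasDerivAt_apply a hg.continuous.continuousAt (hg_pos t ht).1.ne').div_const 2
  have hIoo : Set.Ioo (min c y) (max c y) ⊆ Set.Icc c y := by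
    rw [min_eq_left hcy, max_eq_right hcy]; exact Set.Ioo_subset_Icc_self
  rw [← intervalIntegral.integral_comp_mul_deriv_of_deriv_nonneg
    (fun t ht => (hderiv t (Set.uIcc_of_le hcy ▸ ht)).continuousAt.continuousWithinAt)
    (fun t ht => hderiv t (hIoo ht))
    (fun t ht => by obtain ⟨hgt, hgat⟩ := hg_pos t (hIoo ht); positivity)]
  refine intervalIntegral.integral_congr fun t ht => ?_
  obtain ⟨hgt, hgat⟩ := hg_pos t (Set.uIcc_of_le hcy ▸ ht)
  have h2 : 2 * (fl a t / 2) = fl a t := by ring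
  simp only [Function.comp_apply, h2, hfl.neg_apply_apply]
  field_simp

/-- change of variables for the Frobenius–Perron operator of
`S_a(x) = ½ π_a x`.  Here `fl r x` denotes the flow `π_r x` of the ODE `x' = g(x)`. -/
theorem frobenius_perron_change_of_variables
    (xl xu : ℝ) (hxl : 0 < xl) (hxu : xl < xu)
    (g : ℝ → ℝ) (hg : ContDiff ℝ 1 g)
    (hgpos : ∀ x ∈ Set.Icc xl (2 * xu), 0 < g x)
    (fl : ℝ → ℝ → ℝ)
    (hfl0 : ∀ x, fl 0 x = x)
    (hfladd : ∀ s t x, fl s (fl t x) = fl (s + t) x)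
    (hflderiv : ∀ a x, HasDerivAt (fun s => fl s x) (g (fl a x)) a)
    (a : ℝ) (ha : 0 < a)
    (c y : ℝ) (hc : xl ≤ c) (hcy : c ≤ y) (hy : y ≤ xu)
    (hdom : ∀ r ∈ Set.Icc (0 : ℝ) a, ∀ x ∈ Set.Icc c (2 * y),
      fl r x ∈ Set.Icc xl (2 * xu))
    (f : ℝ → ℝ) (hf : IntervalIntegrable f volume c y) :
    ∫ x in c..y, f x
      = ∫ x in (fl a c / 2)..(fl a y / 2),
          2 * g (fl (-a) (2 * x)) / g (2 * x) * f (fl (-a) (2 * x)) :=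
  frobenius_perron_change_of_variables_general xl xu hxl g hg hgpos fl hfl0 hfladd hflderiv a ha c y
    hc hcy hdom f
end

section
/- Let X = {(x_b, a) : x̲ ≤ x_b ≤ x̄, 0 ≤ a ≤ ā(x_b)}. Let f : X → ℝ be continuous with continuous partial derivative ∂f/∂a and f(x_b, ā(x_b)) = 0 for all x_b, and let φ : X → ℝ be continuous with continuous ∂φ/∂a satisfying the boundary condition φ(x_b, 0) = ∫_0^∞ 2 (P_a(q(·, a) φ(·, a)))(x_b) da for almost every x_b ∈ [x̲, x̄]. Then −∬_X f(x_b, a) (∂φ/∂a)(x_b, a) da dx_b = ∬_X [ (∂f/∂a)(x_b, a) + 2 q(x_b, a) f(S_a(x_b), 0) ] φ(x_b, a) da dx_b. -/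
/-!
Integrating by parts in `a` along each fibre `{x} × [0, ā(x)]` (where `f` vanishes at the top)
reduces the identity to the boundary term:
`∫ f(x, 0) φ(x, 0) dx = ∬ 2 q(y, a) f(S_a y, 0) φ(y, a) da dy`.
By the boundary condition the left side is `∫ f(x, 0) ∫ 2 P_a(q(·, a) φ(·, a))(x) da dx`, and after
exchanging the integrals this is the adjoint relation `∫ h · P_a u = ∫ (h ∘ S_a) · u` for each `a`,
i.e. the substitution `x = S_a y` on the fibre `a = const`. To make `S_a` explicit one uses the time
coordinate `E(w) = ∫ dw / g(w)`, in which the flow is a translation: `π_a y = E⁻¹(E y + a)` as long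
as the orbit stays in `[x̲, 2x̄]`. Hence `S_a` is a diffeomorphism of each fibre with derivative
`g(π_a y) / (2 g(y))`, which is exactly the weight cancelled by `P_a`.
-/

open MeasureTheory Set Filter Topology Function

theorem HasDerivAt.eventually_nhdsGT_lt {f : ℝ → ℝ} {f' x : ℝ} (hf : HasDerivAt f f' x)
    (hf' : 0 < f') : ∀ᶠ y in 𝓝[>] x, f x < f y := by
  have := (hasDerivAt_iff_tendsto_slope.1 hf).mono_left (nhdsGT_le_nhdsNE x)
  filter_upwards [this.eventually (lt_mem_nhds hf'), self_mem_nhdsWithin] with y hy hxy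
  exact (slope_pos_iff hxy).1 hy

theorem HasDerivAt.eventually_nhdsLT_lt {f : ℝ → ℝ} {f' x : ℝ} (hf : HasDerivAt f f' x)
    (hf' : 0 < f') : ∀ᶠ y in 𝓝[<] x, f y < f x := by
  have := (hasDerivAt_iff_tendsto_slope.1 hf).mono_left (nhdsLT_le_nhdsNE x)
  filter_upwards [this.eventually (lt_mem_nhds hf'), self_mem_nhdsWithin] with y hy hyx
  exact (slope_pos_iff_gt hyx).1 hy

section Autonomous

variable {g γ : ℝ → ℝ} {c d u s t : ℝ}

theorem le_of_hasDerivAt_of_le (hγ : ∀ r, HasDerivAt γ (g (γ r)) r) (hc : 0 < g c)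
    (hu : c ≤ γ u) (hut : u ≤ t) : c ≤ γ t := by
  have hγc : Continuous γ := continuous_iff_continuousAt.2 fun r => (hγ r).continuousAt
  refine (IsClosed.Icc_subset_of_forall_mem_nhdsWithin (s := {r | c ≤ γ r}) ?_ hu ?_)
    ⟨hut, le_rfl⟩
  · exact (isClosed_le continuous_const hγc).inter isClosed_Icc
  · rintro r ⟨hr, -⟩
    rcases (show c ≤ γ r from hr).lt_or_eq with hlt | heq
    · exact mem_nhdsWithin_of_mem_nhds
        (hγc.continuousAt.eventually (lt_mem_nhds hlt) |>.mono fun _ => le_of_lt)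
    · filter_upwards [(hγ r).eventually_nhdsGT_lt (heq ▸ hc)] with r' hr'
      exact heq.le.trans hr'.le

theorem lt_of_hasDerivAt_of_lt (hγ : ∀ r, HasDerivAt γ (g (γ r)) r) (hc : 0 < g c)
    (hu : c < γ u) (hut : u ≤ t) : c < γ t := by
  have hle : ∀ r, u ≤ r → c ≤ γ r := fun r hr => le_of_hasDerivAt_of_le hγ hc hu.le hr
  refine (hle t hut).lt_of_ne fun heq => ?_
  have hut' : u < t := hut.lt_of_ne (by rintro rfl; exact hu.ne heq)
  obtain ⟨r, hr, hur⟩ := ((hγ t).eventually_nhdsLT_lt (heq ▸ hc)).and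
    (Ioo_mem_nhdsLT hut') |>.exists
  exact (hle r hur.1.le).not_gt (heq ▸ hr)

theorem mem_Icc_of_hasDerivAt (hγ : ∀ r, HasDerivAt γ (g (γ r)) r) (hc : 0 < g c)
    (hd : 0 < g d) (hu : γ u ∈ Icc c d) (hus : u ≤ s) (hst : s ≤ t) (ht : γ t ≤ d) :
    γ s ∈ Icc c d :=
  ⟨le_of_hasDerivAt_of_le hγ hc hu.1 hus,
    not_lt.1 fun h => (lt_of_hasDerivAt_of_lt hγ hd h hst).not_ge ht⟩

theorem map_eq_add_of_hasDerivAt_inv {E : ℝ → ℝ} (hE : ∀ w ∈ Icc c d, HasDerivAt E (g w)⁻¹ w)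
    (hg : ∀ w ∈ Icc c d, g w ≠ 0) (hγ : ∀ r, HasDerivAt γ (g (γ r)) r) (ht : 0 ≤ t)
    (hin : ∀ r ∈ Icc 0 t, γ r ∈ Icc c d) : E (γ t) = E (γ 0) + t := by
  have hderiv : ∀ r ∈ Icc 0 t, HasDerivAt (fun r => E (γ r) - r) 0 r := fun r hr => by
    have := ((hE _ (hin r hr)).comp r (hγ r)).sub (hasDerivAt_id r)
    rwa [inv_mul_cancel₀ (hg _ (hin r hr)), sub_self] at this
  have := constant_of_has_deriv_right_zero
    (fun r hr => (hderiv r hr).continuousAt.continuousWithinAt)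
    (fun r hr => (hderiv r (Ico_subset_Icc_self hr)).hasDerivWithinAt) t ⟨ht, le_rfl⟩
  linarith

end Autonomous

theorem exists_orderIso_hasDerivAt_inv {g : ℝ → ℝ} {c d : ℝ} (hcd : c ≤ d)
    (hg : ContinuousOn g (Icc c d)) (hpos : ∀ w ∈ Icc c d, 0 < g w) :
    ∃ E : ℝ ≃o ℝ, ∀ w ∈ Icc c d, HasDerivAt E (g w)⁻¹ w := by
  set k : ℝ → ℝ := fun w => (g (projIcc c d hcd w))⁻¹
  have hk : Continuous k :=
    (hg.comp_continuous continuous_projIcc.subtype_val fun w => (projIcc c d hcd w).2).inv₀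
      fun w => (hpos _ (projIcc c d hcd w).2).ne'
  obtain ⟨w₀, hw₀, hmax⟩ := isCompact_Icc.exists_isMaxOn (nonempty_Icc.2 hcd) hg
  have hk_ge : ∀ w, (g w₀)⁻¹ ≤ k w := fun w =>
    inv_anti₀ (hpos _ (projIcc c d hcd w).2) (hmax (projIcc c d hcd w).2)
  set G : ℝ → ℝ := fun w => ∫ s in c..w, k s
  have hG : ∀ w, HasDerivAt G (k w) w := fun w =>
    intervalIntegral.integral_hasDerivAt_right (hk.intervalIntegrable _ _)
      (hk.stronglyMeasurableAtFilter _ _) hk.continuousAt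
  have hGc : Continuous G := continuous_iff_continuousAt.2 fun w => (hG w).continuousAt
  have hmono : StrictMono G :=
    strictMono_of_hasDerivAt_pos hG fun w => (inv_pos.2 (hpos w₀ hw₀)).trans_le (hk_ge w)
  -- `G` grows at least linearly in both directions, hence is onto
  have hgrowth : ∀ v w, v ≤ w → (g w₀)⁻¹ * (w - v) ≤ G w - G v :=
    mul_sub_le_image_sub_of_le_deriv (fun w => (hG w).differentiableAt)
      fun w => (hG w).deriv ▸ hk_ge w
  have hsurj : Surjective G := by
    intro y
    set r := |y - G c| * g w₀
    have hr : (g w₀)⁻¹ * r = |y - G c| := by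
      simp only [r]; field_simp [(hpos w₀ hw₀).ne']
    have hr0 : 0 ≤ r := mul_nonneg (abs_nonneg _) (hpos w₀ hw₀).le
    have h₁ := hgrowth c (c + r) (by linarith)
    have h₂ := hgrowth (c - r) c (by linarith)
    exact intermediate_value_univ (c - r) (c + r) hGc
      ⟨by linarith [neg_abs_le (y - G c)], by linarith [le_abs_self (y - G c)]⟩
  refine ⟨hmono.orderIsoOfSurjective G hsurj, fun w hw => ?_⟩
  simpa [k, projIcc_of_mem hcd hw] using hG w

theorem OrderIso.hasDerivAt_symm_add {g : ℝ → ℝ} (E : ℝ ≃o ℝ) {y a : ℝ}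
    (hy : HasDerivAt E (g y)⁻¹ y)
    (hz : HasDerivAt E (g (E.symm (E y + a)))⁻¹ (E.symm (E y + a)))
    (hg : g (E.symm (E y + a)) ≠ 0) :
    HasDerivAt (fun y => E.symm (E y + a)) (g (E.symm (E y + a)) * (g y)⁻¹) y := by
  have hsymm : HasDerivAt E.symm (g (E.symm (E y + a))) (E y + a) := by
    simpa using hz.of_local_left_inverse E.symm.continuous.continuousAt (inv_ne_zero hg)
      (Eventually.of_forall E.apply_symm_apply)
  exact hsymm.comp y (hy.add_const a)

theorem hasDerivWithinAt_of_eq_symm_add {g : ℝ → ℝ} {E : ℝ ≃o ℝ} {K : Set ℝ}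
    (hE : ∀ w ∈ K, HasDerivAt E (g w)⁻¹ w) (hg : ∀ w ∈ K, g w ≠ 0) {φ : ℝ → ℝ} {s : Set ℝ}
    {a : ℝ} (hφ : ∀ y ∈ s, φ y = E.symm (E y + a)) {y : ℝ} (hy : y ∈ s) (hyK : y ∈ K)
    (hφK : φ y ∈ K) : HasDerivWithinAt φ (g (φ y) * (g y)⁻¹) s y := by
  rw [hφ y hy] at hφK ⊢
  exact (E.hasDerivAt_symm_add (hE y hyK) (hE _ hφK) (hg _ hφK)).hasDerivWithinAt.congr hφ
    (hφ y hy)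

theorem intervalIntegral.integral_add_mul_add_integral_mul_deriv {u u' v v' w : ℝ → ℝ} {b : ℝ}
    (hb : 0 ≤ b) (hu : ∀ a ∈ Icc 0 b, HasDerivAt u (u' a) a)
    (hv : ∀ a ∈ Icc 0 b, HasDerivAt v (v' a) a) (hu' : ContinuousOn u' (Icc 0 b))
    (hv' : ContinuousOn v' (Icc 0 b)) (hub : u b = 0)
    (hw : IntegrableOn (fun a => w a * v a) (Ioi 0)) (hw0 : ∀ a, b < a → w a = 0) :
    (∫ a in 0..b, (u' a + w a) * v a) + ∫ a in 0..b, u a * v' a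
      = (∫ a in Ioi 0, w a * v a) - u 0 * v 0 := by
  rw [← uIcc_of_le hb] at hu hv hu' hv'
  have hvc : ContinuousOn v (uIcc 0 b) := fun a ha => (hv a ha).continuousAt.continuousWithinAt
  have huc : ContinuousOn u (uIcc 0 b) := fun a ha => (hu a ha).continuousAt.continuousWithinAt
  have h₁ : IntervalIntegrable (fun a => u' a * v a) volume 0 b :=
    (hu'.mul hvc).intervalIntegrable
  have h₂ : IntervalIntegrable (fun a => u a * v' a) volume 0 b :=
    (huc.mul hv').intervalIntegrable
  have hparts := integral_deriv_mul_eq_sub hu hv hu'.intervalIntegrable hv'.intervalIntegrable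
  rw [integral_add h₁ h₂, hub, zero_mul] at hparts
  have hw' : ∫ a in 0..b, w a * v a = ∫ a in Ioi 0, w a * v a := by
    rw [integral_of_le hb, ← setIntegral_eq_of_subset_of_forall_sdiff_eq_zero measurableSet_Ioi
      Ioc_subset_Ioi_self fun a ha => by rw [hw0 a (not_le.1 fun h => ha.2 ⟨ha.1, h⟩), zero_mul]]
  simp only [add_mul]
  rw [integral_add h₁ ((intervalIntegrable_iff_integrableOn_Ioc_of_le hb).2
    (hw.mono_set Ioc_subset_Ioi_self)), hw']
  linarith

section Region

def closedRegionBetween (l u : ℝ → ℝ) (s : Set ℝ) : Set (ℝ × ℝ) :=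
  {p | p.1 ∈ s ∧ p.2 ∈ Icc (l p.1) (u p.1)}

variable {s : Set ℝ} {l u : ℝ → ℝ}

theorem isCompact_closedRegionBetween (hs : IsCompact s) (hl : ContinuousOn l s)
    (hu : ContinuousOn u s) : IsCompact (closedRegionBetween l u s) := by
  obtain ⟨A, hA⟩ := hs.bddBelow_image hl
  obtain ⟨B, hB⟩ := hs.bddAbove_image hu
  have hsub : closedRegionBetween l u s ⊆ s ×ˢ Icc A B := fun p ⟨hp, hpl, hpu⟩ =>
    ⟨hp, (hA (mem_image_of_mem l hp)).trans hpl, hpu.trans (hB (mem_image_of_mem u hp))⟩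
  have hclosed : IsClosed (s ×ˢ (univ : Set ℝ)) := hs.isClosed.prod isClosed_univ
  have hl' : ContinuousOn (fun p : ℝ × ℝ => l p.1) (s ×ˢ univ) :=
    hl.comp continuousOn_fst fun p hp => hp.1
  have hu' : ContinuousOn (fun p : ℝ × ℝ => u p.1) (s ×ˢ univ) :=
    hu.comp continuousOn_fst fun p hp => hp.1
  refine (hs.prod isCompact_Icc).of_isClosed_subset ?_ hsub
  convert (hclosed.isClosed_le hl' continuousOn_snd).inter
    (hclosed.isClosed_le continuousOn_snd hu') using 1
  ext p
  simp only [closedRegionBetween, mem_Icc, mem_inter_iff, mem_ofPred_eq, mem_prod, mem_univ]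
  tauto

theorem ContinuousOn.slice_closedRegionBetween {F : ℝ × ℝ → ℝ}
    (hF : ContinuousOn F (closedRegionBetween l u s)) {x : ℝ} (hx : x ∈ s) :
    ContinuousOn (fun a => F (x, a)) (Icc (l x) (u x)) :=
  hF.comp (Continuous.prodMk_right x).continuousOn fun _ ha => ⟨hx, ha⟩

theorem IsCompact.integrableOn_intervalIntegral (hs : IsCompact s) (hl : ContinuousOn l s)
    (hu : ContinuousOn u s) (hlu : ∀ x ∈ s, l x ≤ u x) {F : ℝ × ℝ → ℝ}
    (hF : ContinuousOn F (closedRegionBetween l u s)) :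
    IntegrableOn (fun x => ∫ a in l x..u x, F (x, a)) s := by
  have hR := isCompact_closedRegionBetween hs hl hu
  have hint : Integrable ((closedRegionBetween l u s).indicator F) (volume.prod volume) :=
    (hF.integrableOn_compact hR).integrable_indicator hR.isClosed.measurableSet
  refine hint.integral_prod_left.integrableOn.congr_fun (fun x hx => ?_) hs.isClosed.measurableSet
  dsimp only
  rw [intervalIntegral.integral_of_le (hlu x hx), ← integral_Icc_eq_integral_Ioc,
    ← integral_indicator measurableSet_Icc]
  congr 1
  ext a
  simp [indicator, closedRegionBetween, hx]

end Region

section Fubini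

variable {α β : Type*} [MeasurableSpace α] [MeasurableSpace β] {μ : Measure α} {ν : Measure β}
  [SFinite μ] [SFinite ν] {s : Set α} {t : Set β} {F : α × β → ℝ}

theorem setIntegral_setIntegral_eq_of_subset_of_forall_sdiff_eq_zero (hs : MeasurableSet s)
    (ht : MeasurableSet t) {K : Set (α × β)} (hK : K ⊆ s ×ˢ t) (hF : IntegrableOn F K (μ.prod ν))
    (h0 : ∀ p ∈ s ×ˢ t \ K, F p = 0) :
    ∫ x in s, ∫ y in t, F (x, y) ∂ν ∂μ = ∫ p in K, F p ∂μ.prod ν := by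
  rw [← setIntegral_prod _ (hF.of_forall_sdiff_eq_zero (hs.prod ht) h0),
    setIntegral_eq_of_subset_of_forall_sdiff_eq_zero (hs.prod ht) hK h0]

theorem MeasureTheory.IntegrableOn.integrableOn_setIntegral_prod
    (hF : IntegrableOn F (s ×ˢ t) (μ.prod ν)) :
    IntegrableOn (fun x => ∫ y in t, F (x, y) ∂ν) s μ := by
  rw [IntegrableOn, ← Measure.prod_restrict] at hF
  exact hF.integral_prod_left

theorem MeasureTheory.IntegrableOn.ae_integrableOn_prod
    (hF : IntegrableOn F (s ×ˢ t) (μ.prod ν)) :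
    ∀ᵐ x ∂μ.restrict s, IntegrableOn (fun y => F (x, y)) t ν := by
  rw [IntegrableOn, ← Measure.prod_restrict] at hF
  exact hF.prod_right_ae

end Fubini

theorem neg_setIntegral_eq_of_ae_add_eq_sub {α : Type*} [MeasurableSpace α] {μ : Measure α}
    {s : Set α} {A B N c : α → ℝ} (hA : IntegrableOn A s μ) (hN : IntegrableOn N s μ)
    (hc : IntegrableOn c s μ) (h : ∀ᵐ x ∂μ.restrict s, B x + A x = N x - c x)
    (hcN : ∫ x in s, c x ∂μ = ∫ x in s, N x ∂μ) : -∫ x in s, A x ∂μ = ∫ x in s, B x ∂μ := by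
  have hB : IntegrableOn B s μ :=
    ((hN.sub hc).sub hA).congr_fun_ae (h.mono fun x hx => by simp only [Pi.sub_apply]; linarith)
  have := integral_congr_ae h
  rw [integral_add hB hA, integral_sub hN hc, hcN] at this
  linarith

theorem integral_image_eq_integral_abs_deriv_mul_fiberwise {Ω : Set (ℝ × ℝ)}
    (hΩ : MeasurableSet Ω) {M M' : ℝ → ℝ → ℝ}
    (hMΩ : MeasurableSet ((fun p => (M p.2 p.1, p.2)) '' Ω))
    (hM : ∀ p ∈ Ω, HasDerivWithinAt (M p.2) (M' p.2 p.1) {y | (y, p.2) ∈ Ω} p.1)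
    (hinj : ∀ a, InjOn (M a) {y | (y, a) ∈ Ω}) {F : ℝ × ℝ → ℝ}
    (hF : IntegrableOn F ((fun p => (M p.2 p.1, p.2)) '' Ω))
    (hFM : IntegrableOn (fun p => |M' p.2 p.1| * F (M p.2 p.1, p.2)) Ω) :
    ∫ p in (fun p => (M p.2 p.1, p.2)) '' Ω, F p
      = ∫ p in Ω, |M' p.2 p.1| * F (M p.2 p.1, p.2) := by
  rw [← integral_indicator hMΩ, ← integral_indicator hΩ, Measure.volume_eq_prod,
    integral_prod_symm _ (hF.integrable_indicator hMΩ),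
    integral_prod_symm _ (hFM.integrable_indicator hΩ)]
  refine integral_congr_ae (Eventually.of_forall fun a => ?_)
  have hslice : MeasurableSet {y | (y, a) ∈ Ω} := measurable_prodMk_right hΩ
  have hslice_image :
      {x | (x, a) ∈ (fun p => (M p.2 p.1, p.2)) '' Ω} = M a '' {y | (y, a) ∈ Ω} := by
    ext x; simp
  calc ∫ x, ((fun p => (M p.2 p.1, p.2)) '' Ω).indicator F (x, a)
      = ∫ x in M a '' {y | (y, a) ∈ Ω}, F (x, a) := by
        rw [← hslice_image]
        exact integral_indicator (measurable_prodMk_right hMΩ)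
    _ = ∫ y in {y | (y, a) ∈ Ω}, |M' a y| * F (M a y, a) :=
        integral_image_eq_integral_abs_deriv_smul hslice (fun y hy => hM (y, a) hy) (hinj a) _
    _ = ∫ y, Ω.indicator (fun p => |M' p.2 p.1| * F (M p.2 p.1, p.2)) (y, a) :=
        (integral_indicator hslice).symm

structure IsFlow_s6 (g : ℝ → ℝ) (fl : ℝ → ℝ → ℝ) : Prop where
  zero : ∀ x, fl 0 x = x
  add : ∀ s t x, fl s (fl t x) = fl (s + t) x
  hasDerivAt : ∀ t x, HasDerivAt (fun s => fl s x) (g (fl t x)) t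

/-- The Frobenius–Perron operator `P_a` of `S_a x = fl a x / 2` on `[xl, xu]`. -/
noncomputable def frobeniusPerron (g : ℝ → ℝ) (fl : ℝ → ℝ → ℝ) (xl xu a : ℝ) (u : ℝ → ℝ)
    (x : ℝ) : ℝ :=
  (Icc xl xu).indicator (fun z => 2 * g z / g (2 * x) * u z) (fl (-a) (2 * x))

namespace IsFlow_s6

variable {g : ℝ → ℝ} {fl : ℝ → ℝ → ℝ} {xl xu : ℝ} {al au : ℝ → ℝ}

theorem neg_apply_apply_s6 (hfl : IsFlow_s6 g fl) (a y : ℝ) : fl (-a) (fl a y) = y := by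
  rw [hfl.add, neg_add_cancel, hfl.zero]

theorem apply_neg_apply (hfl : IsFlow_s6 g fl) (a x : ℝ) : fl a (fl (-a) x) = x := by
  rw [hfl.add, add_neg_cancel, hfl.zero]

theorem apply_eq_symm_add (hfl : IsFlow_s6 g fl) {c d : ℝ} {E : ℝ ≃o ℝ}
    (hE : ∀ w ∈ Icc c d, HasDerivAt E (g w)⁻¹ w) (hg : ∀ w ∈ Icc c d, 0 < g w) {y s t : ℝ}
    (hy : y ∈ Icc c d) (hs : 0 ≤ s) (hst : s ≤ t) (ht : fl t y ≤ d) :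
    fl s y = E.symm (E y + s) := by
  have hcd : c ≤ d := hy.1.trans hy.2
  have hin : ∀ r ∈ Icc 0 s, fl r y ∈ Icc c d := fun r hr =>
    mem_Icc_of_hasDerivAt (γ := (fl · y)) (hfl.hasDerivAt · y) (hg c ⟨le_rfl, hcd⟩)
      (hg d ⟨hcd, le_rfl⟩) (by rwa [hfl.zero]) hr.1 (hr.2.trans hst) ht
  have := map_eq_add_of_hasDerivAt_inv (γ := (fl · y)) hE (fun w hw => (hg w hw).ne')
    (hfl.hasDerivAt · y) hs hin
  rw [← E.symm_apply_apply (fl s y), this, hfl.zero]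

theorem frobeniusPerron_apply_half (hfl : IsFlow_s6 g fl) {y : ℝ} (hy : y ∈ Icc xl xu)
    (a : ℝ) (u : ℝ → ℝ) :
    frobeniusPerron g fl xl xu a u (fl a y / 2) = 2 * g y / g (fl a y) * u y := by
  simp only [frobeniusPerron, mul_div_cancel₀ _ (two_ne_zero (α := ℝ)), hfl.neg_apply_apply_s6,
    indicator_of_mem hy]

theorem exists_orderIso_apply_eq_symm_add (hfl : IsFlow_s6 g fl) (hxl : 0 ≤ xl) (hxu : xl ≤ xu)
    (hg : ContinuousOn g (Icc xl (2 * xu))) (hgpos : ∀ w ∈ Icc xl (2 * xu), 0 < g w)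
    (hal : ∀ x ∈ Icc xl xu, 0 ≤ al x)
    (hA5 : ∀ x ∈ Icc xl xu, xl ≤ fl (al x) x / 2 ∧ fl (au x) x / 2 ≤ xu) :
    ∃ E : ℝ ≃o ℝ, (∀ w ∈ Icc xl (2 * xu), HasDerivAt E (g w)⁻¹ w) ∧
      ∀ p ∈ closedRegionBetween al au (Icc xl xu),
        fl p.2 p.1 = E.symm (E p.1 + p.2) ∧ fl p.2 p.1 / 2 ∈ Icc xl xu := by
  obtain ⟨E, hE⟩ := exists_orderIso_hasDerivAt_inv (by linarith) hg hgpos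
  refine ⟨E, hE, fun ⟨y, a⟩ ⟨hy, ha⟩ => ?_⟩
  have hflE : ∀ s, 0 ≤ s → s ≤ au y → fl s y = E.symm (E y + s) := fun s hs hsa =>
    hfl.apply_eq_symm_add hE hgpos ⟨hy.1, by linarith [hy.2]⟩ hs hsa
      (by linarith [(hA5 y hy).2])
  have hal' := hal y hy
  have hlow : fl (al y) y ≤ fl a y := by
    rw [hflE _ hal' (ha.1.trans ha.2), hflE _ (hal'.trans ha.1) ha.2]
    exact E.symm.monotone (by linarith [ha.1])
  have hup : fl a y ≤ fl (au y) y := by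
    rw [hflE _ (hal'.trans ha.1) ha.2, hflE _ (hal'.trans (ha.1.trans ha.2)) le_rfl]
    exact E.symm.monotone (by linarith [ha.2])
  exact ⟨hflE a (hal'.trans ha.1) ha.2,
    by linarith [(hA5 y hy).1], by linarith [(hA5 y hy).2]⟩

theorem continuousOn_mul_frobeniusPerron (hfl : IsFlow_s6 g fl) (hxl : 0 ≤ xl)
    (hg : ContinuousOn g (Icc xl (2 * xu))) (hgpos : ∀ w ∈ Icc xl (2 * xu), 0 < g w)
    {Ω : Set (ℝ × ℝ)} (hΩ : ∀ p ∈ Ω, p.1 ∈ Icc xl xu) {E : ℝ ≃o ℝ}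
    (hE : ∀ p ∈ Ω, fl p.2 p.1 = E.symm (E p.1 + p.2) ∧ fl p.2 p.1 / 2 ∈ Icc xl xu)
    {h : ℝ → ℝ} (hh : ContinuousOn h (Icc xl xu)) {v : ℝ → ℝ → ℝ}
    (hv : ContinuousOn (fun p => v p.1 p.2) Ω) :
    ContinuousOn (fun p => h p.1 * (2 * frobeniusPerron g fl xl xu p.2 (fun z => v z p.2) p.1))
      ((fun p => (fl p.2 p.1 / 2, p.2)) '' Ω) := by
  set T : ℝ × ℝ → ℝ × ℝ := fun p => (fl p.2 p.1 / 2, p.2)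
  -- on `T '' Ω`, the point `fl (-a) (2 x)` is `R (x, a)`, which is continuous
  set R : ℝ × ℝ → ℝ := fun p => E.symm (E (2 * p.1) - p.2)
  have hR : Continuous R := by fun_prop
  have hRT : ∀ p ∈ Ω, R (T p) = p.1 := fun p hp => by
    simp [R, T, mul_div_cancel₀, (hE p hp).1]
  have hK : ∀ p ∈ T '' Ω, 2 * p.1 ∈ Icc xl (2 * xu) := by
    rintro _ ⟨p, hp, rfl⟩
    have := (hE p hp).2
    constructor <;> dsimp only [T] <;> linarith [this.1, this.2]
  have hh' : ContinuousOn (fun p : ℝ × ℝ => h p.1) (T '' Ω) :=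
    hh.comp continuousOn_fst fun _ ⟨p, hp, hpx⟩ => hpx ▸ (hE p hp).2
  have hgR : ContinuousOn (fun p => g (R p)) (T '' Ω) := by
    refine hg.comp hR.continuousOn fun _ ⟨p, hp, hpx⟩ => ?_
    rw [← hpx, hRT p hp]
    exact ⟨(hΩ p hp).1, by linarith [(hΩ p hp).2, (hΩ p hp).1]⟩
  have hg2 : ContinuousOn (fun p : ℝ × ℝ => g (2 * p.1)) (T '' Ω) :=
    hg.comp (by fun_prop : Continuous fun p : ℝ × ℝ => 2 * p.1).continuousOn hK
  have hvR : ContinuousOn (fun p => v (R p) p.2) (T '' Ω) := by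
    refine hv.comp (hR.prodMk continuous_snd).continuousOn fun _ ⟨p, hp, hpx⟩ => ?_
    rw [← hpx]
    simpa [hRT p hp] using hp
  refine ContinuousOn.congr
    (f := fun p => h p.1 * (2 * (2 * g (R p) / g (2 * p.1) * v (R p) p.2)))
    (hh'.mul (continuousOn_const.mul
      (((continuousOn_const.mul hgR).div hg2 fun p hp => (hgpos _ (hK p hp)).ne').mul hvR)))
    fun _ ⟨p, hp, hpx⟩ => ?_
  rw [← hpx]
  simp only [T, hfl.frobeniusPerron_apply_half (hΩ p hp), hRT p hp,
    mul_div_cancel₀ _ (two_ne_zero (α := ℝ))]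

theorem integrableOn_mul_comp_half (hfl : IsFlow_s6 g fl) (hxl : 0 ≤ xl) (hxu : xl ≤ xu)
    (hg : ContinuousOn g (Icc xl (2 * xu))) (hgpos : ∀ w ∈ Icc xl (2 * xu), 0 < g w)
    (hal : ContinuousOn al (Icc xl xu)) (hau : ContinuousOn au (Icc xl xu))
    (hal0 : ∀ x ∈ Icc xl xu, 0 < al x)
    (hA5 : ∀ x ∈ Icc xl xu, xl ≤ fl (al x) x / 2 ∧ fl (au x) x / 2 ≤ xu)
    {h : ℝ → ℝ} (hh : ContinuousOn h (Icc xl xu)) {v : ℝ → ℝ → ℝ}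
    (hv : ContinuousOn (fun p => v p.1 p.2) (closedRegionBetween al au (Icc xl xu)))
    (hv0 : ∀ y ∈ Icc xl xu, ∀ a ∉ Icc (al y) (au y), v y a = 0) :
    IntegrableOn (fun p : ℝ × ℝ => 2 * h (fl p.2 p.1 / 2) * v p.1 p.2)
      (Icc xl xu ×ˢ Ioi 0) := by
  obtain ⟨E, -, hEfl⟩ :=
    hfl.exists_orderIso_apply_eq_symm_add hxl hxu hg hgpos (fun x hx => (hal0 x hx).le) hA5
  have hS : ContinuousOn (fun p : ℝ × ℝ => fl p.2 p.1 / 2)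
      (closedRegionBetween al au (Icc xl xu)) :=
    ContinuousOn.congr (f := fun p => E.symm (E p.1 + p.2) / 2) (by fun_prop)
      fun p hp => by rw [(hEfl p hp).1]
  have hcont : ContinuousOn (fun p : ℝ × ℝ => 2 * h (fl p.2 p.1 / 2) * v p.1 p.2)
      (closedRegionBetween al au (Icc xl xu)) :=
    (continuousOn_const.mul (hh.comp hS fun p hp => (hEfl p hp).2)).mul hv
  refine (hcont.integrableOn_compact (isCompact_closedRegionBetween isCompact_Icc hal hau)
    ).of_forall_sdiff_eq_zero (measurableSet_Icc.prod measurableSet_Ioi) ?_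
  rintro ⟨y, a⟩ ⟨⟨hy, -⟩, hya⟩
  simp [hv0 y hy a fun ha => hya ⟨hy, ha⟩]

theorem setIntegral_mul_eq_of_eq_integral_frobeniusPerron (hfl : IsFlow_s6 g fl) (hxl : 0 ≤ xl)
    (hxu : xl ≤ xu) (hg : ContinuousOn g (Icc xl (2 * xu)))
    (hgpos : ∀ w ∈ Icc xl (2 * xu), 0 < g w) (hal : ContinuousOn al (Icc xl xu))
    (hau : ContinuousOn au (Icc xl xu)) (hal0 : ∀ x ∈ Icc xl xu, 0 < al x)
    (hA5 : ∀ x ∈ Icc xl xu, xl ≤ fl (al x) x / 2 ∧ fl (au x) x / 2 ≤ xu)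
    {h : ℝ → ℝ} (hh : ContinuousOn h (Icc xl xu)) {v : ℝ → ℝ → ℝ}
    (hv : ContinuousOn (fun p => v p.1 p.2) (closedRegionBetween al au (Icc xl xu)))
    (hv0 : ∀ y ∈ Icc xl xu, ∀ a ∉ Icc (al y) (au y), v y a = 0) {ψ : ℝ → ℝ}
    (hψ : ∀ᵐ x ∂volume.restrict (Icc xl xu),
      ψ x = ∫ a in Ioi 0, 2 * frobeniusPerron g fl xl xu a (fun z => v z a) x) :
    ∫ x in Icc xl xu, h x * ψ x = ∫ y in Icc xl xu, ∫ a in Ioi 0, 2 * h (fl a y / 2) * v y a := by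
  set Ω := closedRegionBetween al au (Icc xl xu)
  set T : ℝ × ℝ → ℝ × ℝ := fun p => (fl p.2 p.1 / 2, p.2)
  obtain ⟨E, hE, hEfl⟩ :=
    hfl.exists_orderIso_apply_eq_symm_add hxl hxu hg hgpos (fun x hx => (hal0 x hx).le) hA5
  have hK : ∀ p ∈ Ω, p.1 ∈ Icc xl (2 * xu) ∧ fl p.2 p.1 ∈ Icc xl (2 * xu) := fun p hp =>
    have := (hEfl p hp).2
    ⟨⟨hp.1.1, by linarith [hp.1.1, hp.1.2]⟩, by linarith [this.1], by linarith [this.2]⟩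
  have hΩ : IsCompact Ω := isCompact_closedRegionBetween isCompact_Icc hal hau
  have hTΩ : IsCompact (T '' Ω) := hΩ.image_of_continuousOn <|
    ContinuousOn.congr (f := fun p => (E.symm (E p.1 + p.2) / 2, p.2)) (by fun_prop)
      fun p hp => by simp [T, (hEfl p hp).1]
  have hΩsub : Ω ⊆ Icc xl xu ×ˢ Ioi 0 := fun p hp => ⟨hp.1, (hal0 _ hp.1).trans_le hp.2.1⟩
  have hTΩsub : T '' Ω ⊆ Icc xl xu ×ˢ Ioi 0 := by
    rintro _ ⟨p, hp, rfl⟩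
    exact ⟨(hEfl p hp).2, (hal0 _ hp.1).trans_le hp.2.1⟩
  have hWint := (hfl.continuousOn_mul_frobeniusPerron hxl hg hgpos (fun p hp => hp.1) hEfl hh
    hv).integrableOn_compact (μ := volume) hTΩ
  have hNint := (hfl.integrableOn_mul_comp_half hxl hxu hg hgpos hal hau hal0 hA5 hh hv
    hv0).mono_set hΩsub
  -- the Jacobian `g (π_a y) / (2 g y)` of `S_a` cancels the weight in `P_a`
  have hJac : ∀ p ∈ Ω, |g (fl p.2 p.1) * (g p.1)⁻¹ / 2| * (h (fl p.2 p.1 / 2) *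
      (2 * frobeniusPerron g fl xl xu p.2 (fun z => v z p.2) (fl p.2 p.1 / 2)))
        = 2 * h (fl p.2 p.1 / 2) * v p.1 p.2 := fun p hp => by
    have := hgpos _ (hK p hp).1
    have := hgpos _ (hK p hp).2
    rw [hfl.frobeniusPerron_apply_half hp.1, abs_of_pos (by positivity)]
    field_simp
  have hW0 : ∀ p ∈ Icc xl xu ×ˢ Ioi 0 \ T '' Ω,
      h p.1 * (2 * frobeniusPerron g fl xl xu p.2 (fun z => v z p.2) p.1) = 0 := by
    rintro ⟨x, a⟩ ⟨-, hxa⟩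
    by_cases hz : fl (-a) (2 * x) ∈ Icc xl xu
    · have hzΩ : (fl (-a) (2 * x), a) ∉ Ω := fun hmem =>
        hxa ⟨_, hmem, by simp [T, hfl.apply_neg_apply]⟩
      simp [frobeniusPerron, indicator_of_mem hz, hv0 _ hz a fun ha => hzΩ ⟨hz, ha⟩]
    · simp [frobeniusPerron, indicator_of_notMem hz]
  have hN0 : ∀ p ∈ Icc xl xu ×ˢ Ioi 0 \ Ω, 2 * h (fl p.2 p.1 / 2) * v p.1 p.2 = 0 := by
    rintro ⟨y, a⟩ ⟨⟨hy, -⟩, hya⟩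
    simp [hv0 y hy a fun ha => hya ⟨hy, ha⟩]
  calc ∫ x in Icc xl xu, h x * ψ x
      = ∫ x in Icc xl xu, ∫ a in Ioi 0,
          h x * (2 * frobeniusPerron g fl xl xu a (fun z => v z a) x) :=
        integral_congr_ae (hψ.mono fun x hx => by simp only [hx, integral_const_mul])
    _ = ∫ p in T '' Ω, h p.1 * (2 * frobeniusPerron g fl xl xu p.2 (fun z => v z p.2) p.1) :=
        setIntegral_setIntegral_eq_of_subset_of_forall_sdiff_eq_zero measurableSet_Icc
          measurableSet_Ioi hTΩsub hWint hW0
    _ = ∫ p in Ω, 2 * h (fl p.2 p.1 / 2) * v p.1 p.2 := by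
        rw [integral_image_eq_integral_abs_deriv_mul_fiberwise (M := fun a y => fl a y / 2)
          (M' := fun a y => g (fl a y) * (g y)⁻¹ / 2) hΩ.measurableSet
          hTΩ.isClosed.measurableSet
          (fun p hp => (hasDerivWithinAt_of_eq_symm_add hE (fun w hw => (hgpos w hw).ne')
            (fun y hy => (hEfl (y, p.2) hy).1) hp (hK p hp).1 (hK p hp).2).div_const 2)
          (fun a y hy y' hy' hyy' => by
            simpa [(hEfl (y, a) hy).1, (hEfl (y', a) hy').1] using hyy')
          hWint (hNint.congr_fun (fun p hp => (hJac p hp).symm) hΩ.measurableSet)]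
        exact setIntegral_congr_fun hΩ.measurableSet hJac
    _ = ∫ y in Icc xl xu, ∫ a in Ioi 0, 2 * h (fl a y / 2) * v y a :=
        (setIntegral_setIntegral_eq_of_subset_of_forall_sdiff_eq_zero measurableSet_Icc
          measurableSet_Ioi hΩsub hNint hN0).symm

end IsFlow_s6

theorem adjoint_integration_by_parts_general
    (xl xu : ℝ) (hxl : 0 < xl) (hxu : xl < xu)
    (g : ℝ → ℝ) (hg : ContDiffOn ℝ 1 g (Set.Icc xl (2 * xu)))
    (hgpos : ∀ x ∈ Set.Icc xl (2 * xu), 0 < g x)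
    (fl : ℝ → ℝ → ℝ)
    (hfl0 : ∀ x, fl 0 x = x)
    (hfladd : ∀ s t x, fl s (fl t x) = fl (s + t) x)
    (hflderiv : ∀ a x, HasDerivAt (fun s => fl s x) (g (fl a x)) a)
    (q : ℝ → ℝ → ℝ)
    (hqcont : ContinuousOn (fun p : ℝ × ℝ => q p.1 p.2) (Set.Icc xl xu ×ˢ Set.univ))
    (al au : ℝ → ℝ)
    (halcont : ContinuousOn al (Set.Icc xl xu)) (haucont : ContinuousOn au (Set.Icc xl xu))
    (hbounds : ∀ x ∈ Set.Icc xl xu, 0 < al x ∧ al x < au x)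
    (hqzero : ∀ x ∈ Set.Icc xl xu, ∀ a, a ∉ Set.Ioo (al x) (au x) → q x a = 0)
    (hA5 : ∀ x ∈ Set.Icc xl xu, xl ≤ fl (al x) x / 2 ∧ fl (au x) x / 2 ≤ xu)
    (X : Set (ℝ × ℝ))
    (hX : X = {p : ℝ × ℝ | xl ≤ p.1 ∧ p.1 ≤ xu ∧ 0 ≤ p.2 ∧ p.2 ≤ au p.1})
    -- `f`, continuous with continuous `∂f/∂a`, vanishing on the upper boundary
    (f fa : ℝ → ℝ → ℝ)
    (hfcont : ContinuousOn (fun p : ℝ × ℝ => f p.1 p.2) X)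
    (hfderiv : ∀ x ∈ Set.Icc xl xu, ∀ a ∈ Set.Icc 0 (au x), HasDerivAt (f x) (fa x a) a)
    (hfacont : ContinuousOn (fun p : ℝ × ℝ => fa p.1 p.2) X)
    (hfbound : ∀ x ∈ Set.Icc xl xu, f x (au x) = 0)
    -- `φ`, continuous with continuous `∂φ/∂a`, satisfying the boundary condition
    (φ φa : ℝ → ℝ → ℝ)
    (hφcont : ContinuousOn (fun p : ℝ × ℝ => φ p.1 p.2) X)
    (hφderiv : ∀ x ∈ Set.Icc xl xu, ∀ a ∈ Set.Icc 0 (au x), HasDerivAt (φ x) (φa x a) a)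
    (hφacont : ContinuousOn (fun p : ℝ × ℝ => φa p.1 p.2) X)
    (hφbound : ∀ᵐ x ∂(volume.restrict (Set.Icc xl xu)),
      φ x 0 = ∫ a in Set.Ioi (0:ℝ),
        2 * Set.indicator (Set.Icc xl xu)
          (fun z => 2 * g z / g (2 * x) * (q z a * φ z a)) (fl (-a) (2 * x))) :
    -(∫ x in xl..xu, ∫ a in (0:ℝ)..au x, f x a * φa x a)
      = ∫ x in xl..xu, ∫ a in (0:ℝ)..au x,
          (fa x a + 2 * q x a * f (fl a x / 2) 0) * φ x a := by
  have hfl : IsFlow_s6 g fl := ⟨hfl0, hfladd, hflderiv⟩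
  obtain rfl : X = closedRegionBetween 0 au (Icc xl xu) := by
    rw [hX]; ext p
    simp only [closedRegionBetween, mem_Icc, Pi.zero_apply, mem_ofPred_eq]
    tauto
  have hal0 : ∀ x ∈ Icc xl xu, 0 < al x := fun x hx => (hbounds x hx).1
  have hau0 : ∀ x ∈ Icc xl xu, 0 ≤ au x := fun x hx => (hal0 x hx).le.trans (hbounds x hx).2.le
  have hbottom :
      MapsTo (fun x => (x, (0 : ℝ))) (Icc xl xu) (closedRegionBetween 0 au (Icc xl xu)) :=
    fun x hx => ⟨hx, le_rfl, hau0 x hx⟩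
  have hf0 : ContinuousOn (fun x => f x 0) (Icc xl xu) :=
    hfcont.comp (Continuous.prodMk_left 0).continuousOn hbottom
  have hφ0 : ContinuousOn (fun x => φ x 0) (Icc xl xu) :=
    hφcont.comp (Continuous.prodMk_left 0).continuousOn hbottom
  have hv : ContinuousOn (fun p : ℝ × ℝ => q p.1 p.2 * φ p.1 p.2)
      (closedRegionBetween al au (Icc xl xu)) :=
    (hqcont.mono fun p hp => ⟨hp.1, mem_univ _⟩).mul
      (hφcont.mono fun p hp => ⟨hp.1, (hal0 _ hp.1).le.trans hp.2.1, hp.2.2⟩)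
  have hv0 : ∀ y ∈ Icc xl xu, ∀ a ∉ Icc (al y) (au y), q y a * φ y a = 0 := fun y hy a ha => by
    rw [hqzero y hy a fun h => ha (Ioo_subset_Icc_self h), zero_mul]
  have hN : IntegrableOn (fun p : ℝ × ℝ => 2 * f (fl p.2 p.1 / 2) 0 * (q p.1 p.2 * φ p.1 p.2))
      (Icc xl xu ×ˢ Ioi 0) (volume.prod volume) :=
    hfl.integrableOn_mul_comp_half hxl.le hxu.le hg.continuousOn hgpos halcont haucont hal0 hA5
      hf0 hv hv0
  have hboundary : ∫ x in Icc xl xu, f x 0 * φ x 0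
      = ∫ x in Icc xl xu, ∫ a in Ioi 0, 2 * f (fl a x / 2) 0 * (q x a * φ x a) :=
    hfl.setIntegral_mul_eq_of_eq_integral_frobeniusPerron hxl.le hxu.le hg.continuousOn hgpos
      halcont haucont hal0 hA5 hf0 hv hv0 hφbound
  have hfibre : ∀ᵐ x ∂volume.restrict (Icc xl xu),
      (∫ a in (0:ℝ)..au x, (fa x a + 2 * q x a * f (fl a x / 2) 0) * φ x a)
        + (∫ a in (0:ℝ)..au x, f x a * φa x a)
      = (∫ a in Ioi 0, 2 * f (fl a x / 2) 0 * (q x a * φ x a)) - f x 0 * φ x 0 := by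
    filter_upwards [ae_restrict_mem measurableSet_Icc, hN.ae_integrableOn_prod] with x hx hNx
    rw [intervalIntegral.integral_add_mul_add_integral_mul_deriv (hau0 x hx) (hfderiv x hx)
      (hφderiv x hx) (hfacont.slice_closedRegionBetween hx)
      (hφacont.slice_closedRegionBetween hx) (hfbound x hx)
      (hNx.congr_fun (fun a _ => by ring) measurableSet_Ioi)
      fun a ha => by simp [hqzero x hx a fun h => ha.not_gt h.2]]
    congr 1
    exact setIntegral_congr_fun measurableSet_Ioi fun a _ => by ring
  rw [intervalIntegral.integral_of_le hxu.le, intervalIntegral.integral_of_le hxu.le,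
    ← integral_Icc_eq_integral_Ioc, ← integral_Icc_eq_integral_Ioc]
  exact neg_setIntegral_eq_of_ae_add_eq_sub
    (isCompact_Icc.integrableOn_intervalIntegral continuousOn_const haucont hau0
      (F := fun p => f p.1 p.2 * φa p.1 p.2) (hfcont.mul hφacont))
    hN.integrableOn_setIntegral_prod (hf0.mul hφ0).integrableOn_Icc hfibre hboundary

/-- weak formulation / integration by parts on
`X = {(x_b,a) : x̲ ≤ x_b ≤ x̄, 0 ≤ a ≤ ā(x_b)}`, relating the generator `A` and its
adjoint `A*`.  `fl r x` is the flow `π_r x` of `x' = g(x)`, `S_a(x) = fl a x / 2`. -/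
theorem adjoint_integration_by_parts
    (xl xu : ℝ) (hxl : 0 < xl) (hxu : xl < xu)
    (g : ℝ → ℝ) (hg : ContDiffOn ℝ 1 g (Set.Icc xl (2 * xu)))
    (hgpos : ∀ x ∈ Set.Icc xl (2 * xu), 0 < g x)
    (fl : ℝ → ℝ → ℝ)
    (hfl0 : ∀ x, fl 0 x = x)
    (hfladd : ∀ s t x, fl s (fl t x) = fl (s + t) x)
    (hflderiv : ∀ a x, HasDerivAt (fun s => fl s x) (g (fl a x)) a)
    (q : ℝ → ℝ → ℝ)
    (hqcont : ContinuousOn (fun p : ℝ × ℝ => q p.1 p.2) (Set.Icc xl xu ×ˢ Set.univ))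
    (hqnn : ∀ x a, 0 ≤ q x a)
    (al au : ℝ → ℝ)
    (halcont : ContinuousOn al (Set.Icc xl xu)) (haucont : ContinuousOn au (Set.Icc xl xu))
    (hbounds : ∀ x ∈ Set.Icc xl xu, 0 < al x ∧ al x < au x)
    (hqdens : ∀ x ∈ Set.Icc xl xu, ∫ a, q x a = 1)
    (hqpos : ∀ x ∈ Set.Icc xl xu, ∀ a ∈ Set.Ioo (al x) (au x), 0 < q x a)
    (hqzero : ∀ x ∈ Set.Icc xl xu, ∀ a, a ∉ Set.Ioo (al x) (au x) → q x a = 0)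
    (hA5 : ∀ x ∈ Set.Icc xl xu, xl ≤ fl (al x) x / 2 ∧ fl (au x) x / 2 ≤ xu)
    (X : Set (ℝ × ℝ))
    (hX : X = {p : ℝ × ℝ | xl ≤ p.1 ∧ p.1 ≤ xu ∧ 0 ≤ p.2 ∧ p.2 ≤ au p.1})
    -- `f`, continuous with continuous `∂f/∂a`, vanishing on the upper boundary
    (f fa : ℝ → ℝ → ℝ)
    (hfcont : ContinuousOn (fun p : ℝ × ℝ => f p.1 p.2) X)
    (hfderiv : ∀ x ∈ Set.Icc xl xu, ∀ a ∈ Set.Icc 0 (au x), HasDerivAt (f x) (fa x a) a)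
    (hfacont : ContinuousOn (fun p : ℝ × ℝ => fa p.1 p.2) X)
    (hfbound : ∀ x ∈ Set.Icc xl xu, f x (au x) = 0)
    -- `φ`, continuous with continuous `∂φ/∂a`, satisfying the boundary condition
    (φ φa : ℝ → ℝ → ℝ)
    (hφcont : ContinuousOn (fun p : ℝ × ℝ => φ p.1 p.2) X)
    (hφderiv : ∀ x ∈ Set.Icc xl xu, ∀ a ∈ Set.Icc 0 (au x), HasDerivAt (φ x) (φa x a) a)
    (hφacont : ContinuousOn (fun p : ℝ × ℝ => φa p.1 p.2) X)
    (hφbound : ∀ᵐ x ∂(volume.restrict (Set.Icc xl xu)),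
      φ x 0 = ∫ a in Set.Ioi (0:ℝ),
        2 * Set.indicator (Set.Icc xl xu)
          (fun z => 2 * g z / g (2 * x) * (q z a * φ z a)) (fl (-a) (2 * x))) :
    -(∫ x in xl..xu, ∫ a in (0:ℝ)..au x, f x a * φa x a)
      = ∫ x in xl..xu, ∫ a in (0:ℝ)..au x,
          (fa x a + 2 * q x a * f (fl a x / 2) 0) * φ x a :=
  adjoint_integration_by_parts_general xl xu hxl hxu g hg hgpos fl hfl0 hfladd hflderiv q hqcont al
    au halcont haucont hbounds hqzero hA5 X hX f fa hfcont hfderiv hfacont hfbound φ φa hφcont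
    hφderiv hφacont hφbound
end

section
/- Let λ > 0 and let ṽ ∈ C([x̲, x̄]) satisfy K_λ ṽ = ṽ. Define v(x_b, a) := ∫_a^∞ 2 q(x_b, s) ṽ(S_s(x_b)) e^{−λ(s − a)} ds for (x_b, a) with x̲ ≤ x_b ≤ x̄ and 0 ≤ a ≤ ā(x_b). Then v is continuous, v(x_b, 0) = ṽ(x_b), v(x_b, ā(x_b)) = 0, the partial derivative ∂v/∂a exists and is continuous, and v satisfies λ v(x_b, a) − (∂v/∂a)(x_b, a) = 2 q(x_b, a) ṽ(S_a(x_b)) for all such (x_b, a). -/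
open MeasureTheory Set Real Function

/-!
Since `q(x, ·)` vanishes beyond `ā(x) ≤ B`, `v(x, a) = e^{λa} ∫_a^B F(x, s) e^{-λs} ds` with
`F(x, s) = 2 q(x, s) ṽ(S_s x)`; the fundamental theorem of calculus gives the equation for
`∂v/∂a`, and the boundary values are read off the support of `q` and the fixed-point equation.
Joint continuity of `v` needs `F` continuous, hence the flow continuous in its initial point:
as `g > 0` at `x̲` and `2x̄`, trajectories from `[x̲, x̄]` stay in `[x̲, 2x̄]` up to time `ā`,
where `g` is Lipschitz, and Grönwall's inequality applies. Away from the support of `q` the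
arguments of `q` and `ṽ` are clamped, so that `F` becomes continuous everywhere.
-/

section Flow

variable {g : ℝ → ℝ} {fl : ℝ → ℝ → ℝ}

theorem le_flow_of_le_flow (hfl : ∀ a x, HasDerivAt (fun s => fl s x) (g (fl a x)) a)
    {c x T t : ℝ} (hc : 0 < g c) (hT : c ≤ fl T x) (ht : T ≤ t) : c ≤ fl t x :=
  image_le_of_deriv_right_lt_deriv_boundary (f' := fun _ => 0) (B := fun s => fl s x)
    continuousOn_const (fun _ _ => hasDerivWithinAt_const _ _ _) hT (fun s => hfl s x)
    (fun _ _ hs => hs ▸ hc) (⟨ht, le_rfl⟩ : t ∈ Icc T t)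

theorem flow_le_of_flow_le (hfl : ∀ a x, HasDerivAt (fun s => fl s x) (g (fl a x)) a)
    {c x T t : ℝ} (hc : 0 < g c) (hT : fl T x ≤ c) (ht : t ≤ T) : fl t x ≤ c := by
  -- run the flow backwards from `T`, so that `c` becomes a barrier from above
  have hrev : ∀ s, HasDerivAt (fun s => fl (t + T - s) x) (-g (fl (t + T - s) x)) s := fun s => by
    simpa [comp_def] using (hfl (t + T - s) x).comp s ((hasDerivAt_id s).const_sub (t + T))
  have := image_le_of_deriv_right_lt_deriv_boundary (B' := fun _ => 0)
    (fun s _ => (hrev s).continuousAt.continuousWithinAt) (fun s _ => (hrev s).hasDerivWithinAt)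
    (by simpa using hT) (fun _ => hasDerivAt_const _ c) (fun s _ hs => by simpa [hs] using hc)
    (⟨ht, le_rfl⟩ : T ∈ Icc t T)
  simpa using this

theorem flow_mem_Icc (hfl : ∀ a x, HasDerivAt (fun s => fl s x) (g (fl a x)) a)
    {lo hi x T₀ T₁ t : ℝ} (hlo : 0 < g lo) (hhi : 0 < g hi) (h₀ : lo ≤ fl T₀ x)
    (h₁ : fl T₁ x ≤ hi) (ht : t ∈ Icc T₀ T₁) : fl t x ∈ Icc lo hi :=
  ⟨le_flow_of_le_flow hfl hlo h₀ ht.1, flow_le_of_flow_le hfl hhi h₁ ht.2⟩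

theorem abs_flow_sub_flow_le (hfl : ∀ a x, HasDerivAt (fun s => fl s x) (g (fl a x)) a)
    {R : Set ℝ} {M x a b t s : ℝ} (hgM : ∀ y ∈ R, |g y| ≤ M)
    (hR : ∀ τ ∈ Icc a b, fl τ x ∈ R) (ht : t ∈ Icc a b) (hs : s ∈ Icc a b) :
    |fl t x - fl s x| ≤ M * |t - s| :=
  (convex_Icc a b).norm_image_sub_le_of_norm_hasDerivWithin_le
    (fun τ _ => (hfl τ x).hasDerivWithinAt) (fun τ hτ => hgM _ (hR τ hτ)) hs ht

theorem dist_flow_le_of_lipschitzOnWith (hfl0 : ∀ x, fl 0 x = x)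
    (hfl : ∀ a x, HasDerivAt (fun s => fl s x) (g (fl a x)) a)
    {R : Set ℝ} {K : NNReal} (hgK : LipschitzOnWith K g R) {x y τ : ℝ}
    (hx : ∀ t ∈ Icc 0 τ, fl t x ∈ R) (hy : ∀ t ∈ Icc 0 τ, fl t y ∈ R) (hτ : 0 ≤ τ) :
    dist (fl τ x) (fl τ y) ≤ dist x y * exp (K * τ) := by
  have hcont : ∀ z, ContinuousOn (fun s => fl s z) (Icc 0 τ) := fun z =>
    fun s _ => (hfl s z).continuousAt.continuousWithinAt
  simpa using dist_le_of_trajectories_ODE_of_mem (v := fun _ => g) (s := fun _ => R)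
    (fun _ _ => hgK) (hcont x) (fun t _ => (hfl t x).hasDerivWithinAt)
    (fun t ht => hx t (Ico_subset_Icc_self ht)) (hcont y) (fun t _ => (hfl t y).hasDerivWithinAt)
    (fun t ht => hy t (Ico_subset_Icc_self ht)) (by rw [hfl0, hfl0]) τ ⟨hτ, le_rfl⟩

theorem dist_flow_le (hfl0 : ∀ x, fl 0 x = x)
    (hfl : ∀ a x, HasDerivAt (fun s => fl s x) (g (fl a x)) a)
    {R : Set ℝ} {M : ℝ} {K : NNReal} (hgM : ∀ y ∈ R, |g y| ≤ M) (hgK : LipschitzOnWith K g R)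
    {x y Tx Ty t s : ℝ} (hx : ∀ τ ∈ Icc 0 Tx, fl τ x ∈ R) (hy : ∀ τ ∈ Icc 0 Ty, fl τ y ∈ R)
    (ht : t ∈ Icc 0 Tx) (hs : s ∈ Icc 0 Ty) :
    dist (fl t x) (fl s y) ≤ 2 * M * |t - s| + dist x y * exp (K * Ty) := by
  have hM : 0 ≤ M := (abs_nonneg _).trans (hgM _ (hx 0 ⟨le_rfl, ht.1.trans ht.2⟩))
  have hclamp : |t - min t Ty| ≤ |t - s| ∧ |min t Ty - s| ≤ |t - s| := by
    rcases le_total t Ty with h | h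
    · simp [min_eq_left h]
    · rw [min_eq_right h, abs_of_nonneg (sub_nonneg.2 h), abs_of_nonneg (sub_nonneg.2 hs.2),
        abs_of_nonneg (by linarith [hs.2])]
      constructor <;> linarith [hs.2]
  -- compare both trajectories at the common time `min t Ty`, which lies between `t` and `s`
  set τ := min t Ty
  have hτx : τ ∈ Icc 0 Tx := ⟨le_min ht.1 (hs.1.trans hs.2), (min_le_left _ _).trans ht.2⟩
  have hτy : τ ∈ Icc 0 Ty := ⟨le_min ht.1 (hs.1.trans hs.2), min_le_right _ _⟩
  have hτ : dist (fl τ x) (fl τ y) ≤ dist x y * exp (K * Ty) :=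
    (dist_flow_le_of_lipschitzOnWith hfl0 hfl hgK
      (fun r hr => hx r ⟨hr.1, hr.2.trans hτx.2⟩) (fun r hr => hy r ⟨hr.1, hr.2.trans hτy.2⟩)
      hτx.1).trans (by gcongr; exact hτy.2)
  calc dist (fl t x) (fl s y)
      ≤ dist (fl t x) (fl τ x) + dist (fl τ x) (fl τ y) + dist (fl τ y) (fl s y) :=
        dist_triangle4 _ _ _ _
    _ ≤ M * |t - s| + dist x y * exp (K * Ty) + M * |t - s| := by
        rw [Real.dist_eq, Real.dist_eq (fl τ y)]
        gcongr
        · exact (abs_flow_sub_flow_le hfl hgM hx ht hτx).trans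
            (mul_le_mul_of_nonneg_left hclamp.1 hM)
        · exact (abs_flow_sub_flow_le hfl hgM hy hτy hs).trans
            (mul_le_mul_of_nonneg_left hclamp.2 hM)
    _ = 2 * M * |t - s| + dist x y * exp (K * Ty) := by ring

theorem continuousOn_flow (hfl0 : ∀ x, fl 0 x = x)
    (hfl : ∀ a x, HasDerivAt (fun s => fl s x) (g (fl a x)) a)
    {R S : Set ℝ} {M B : ℝ} {K : NNReal} (hgM : ∀ y ∈ R, |g y| ≤ M) (hgK : LipschitzOnWith K g R)
    {T : ℝ → ℝ} (hTB : ∀ x ∈ S, T x ≤ B) (hR : ∀ x ∈ S, ∀ t ∈ Icc 0 (T x), fl t x ∈ R) :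
    ContinuousOn (fun p : ℝ × ℝ => fl p.2 p.1) {p | p.1 ∈ S ∧ p.2 ∈ Icc 0 (T p.1)} := by
  refine (LipschitzOnWith.of_dist_le_mul
    (K := Real.toNNReal (2 * M + exp (K * B))) fun p hp p' hp' => ?_).continuousOn
  have hM : 0 ≤ M := (abs_nonneg _).trans (hgM _ (hR _ hp.1 0 ⟨le_rfl, hp.2.1.trans hp.2.2⟩))
  have hd₁ : dist p.1 p'.1 ≤ dist p p' := le_max_left _ _
  have hd₂ : |p.2 - p'.2| ≤ dist p p' := le_max_right _ _
  calc dist (fl p.2 p.1) (fl p'.2 p'.1)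
      ≤ 2 * M * |p.2 - p'.2| + dist p.1 p'.1 * exp (K * T p'.1) :=
        dist_flow_le hfl0 hfl hgM hgK (hR _ hp.1) (hR _ hp'.1) hp.2 hp'.2
    _ ≤ 2 * M * dist p p' + dist p p' * exp (K * B) := by
        gcongr
        exact hTB _ hp'.1
    _ ≤ Real.toNNReal (2 * M + exp (K * B)) * dist p p' := by
        rw [Real.coe_toNNReal _ (by positivity)]
        linarith

end Flow

theorem exists_continuous_eq_mul_comp {a b : ℝ} (hab : a ≤ b) {T : ℝ → ℝ}
    (hT : ContinuousOn T (Icc a b)) (hT₀ : ∀ x ∈ Icc a b, 0 ≤ T x)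
    {q : ℝ → ℝ → ℝ} (hq : ContinuousOn (uncurry q) (Icc a b ×ˢ univ))
    {Φ : ℝ × ℝ → ℝ} (hΦ : ContinuousOn Φ {p | p.1 ∈ Icc a b ∧ p.2 ∈ Icc 0 (T p.1)})
    {h : ℝ → ℝ} (hh : ContinuousOn h (Icc a b))
    (hsupp : ∀ x ∈ Icc a b, ∀ s, q x s ≠ 0 → s ∈ Icc 0 (T x) ∧ Φ (x, s) ∈ Icc a b) :
    ∃ F : ℝ → ℝ → ℝ, Continuous (uncurry F) ∧ ∀ x ∈ Icc a b, ∀ s, F x s = q x s * h (Φ (x, s)) := by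
  -- precompose with retractions onto the sets where `q`, `Φ` and `h` are continuous
  let c : ℝ → ℝ := fun x => projIcc a b hab x
  have hc : Continuous c := continuous_subtype_val.comp continuous_projIcc
  have hcmem : ∀ x, c x ∈ Icc a b := fun x => (projIcc a b hab x).2
  have hcid : ∀ x ∈ Icc a b, c x = x := fun x hx => congrArg Subtype.val (projIcc_of_mem hab hx)
  let r : ℝ × ℝ → ℝ × ℝ := fun p => (c p.1, max 0 (min p.2 (T (c p.1))))
  have hr : Continuous r := (hc.comp continuous_fst).prodMk
    (continuous_const.max (continuous_snd.min (hT.comp_continuous (hc.comp continuous_fst)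
      fun p => hcmem p.1)))
  have hrmem : ∀ p, r p ∈ {p : ℝ × ℝ | p.1 ∈ Icc a b ∧ p.2 ∈ Icc 0 (T p.1)} := fun p =>
    ⟨hcmem p.1, le_max_left _ _, max_le (hT₀ _ (hcmem p.1)) (min_le_right _ _)⟩
  refine ⟨fun x s => q (c x) s * h (c (Φ (r (x, s)))), ?_, fun x hx s => ?_⟩
  · exact (hq.comp_continuous ((hc.comp continuous_fst).prodMk continuous_snd)
      fun p => ⟨hcmem p.1, mem_univ _⟩).mul
      (hh.comp_continuous (hc.comp ((hΦ.comp_continuous hr hrmem))) fun p => hcmem _)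
  · simp only [hcid x hx]
    by_cases hqs : q x s = 0
    · simp [hqs]
    obtain ⟨hs, hΦs⟩ := hsupp x hx s hqs
    have hrxs : r (x, s) = (x, s) := by
      simp only [r, hcid x hx, min_eq_left hs.2, max_eq_right hs.1]
    rw [hrxs, hcid _ hΦs]

theorem setIntegral_Ioi_eq_intervalIntegral_of_eq_zero {f : ℝ → ℝ} {a α β : ℝ} (haα : a ≤ α)
    (hαβ : α ≤ β) (hf : ∀ s ∉ Ioo α β, f s = 0) :
    ∫ s in Ioi a, f s = ∫ s in α..β, f s := by
  rw [intervalIntegral.integral_of_le hαβ,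
    setIntegral_eq_integral_of_forall_compl_eq_zero (s := Ioc α β)
      fun s hs => hf s fun h => hs ⟨h.1, h.2.le⟩,
    setIntegral_eq_integral_of_forall_compl_eq_zero (s := Ioi a)
      fun s hs => hf s fun h => hs (haα.trans_lt h.1)]

section ExpTail

variable {lam B : ℝ}

theorem setIntegral_Ioi_mul_exp_eq {f : ℝ → ℝ} (hf : ∀ s, B < s → f s = 0) (a : ℝ) :
    ∫ s in Ioi a, f s * exp (-(lam * (s - a)))
      = exp (lam * a) * ∫ s in a..B, f s * exp (-(lam * s)) := by
  rcases le_or_gt a B with haB | hBa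
  · rw [intervalIntegral.integral_of_le haB, ← integral_const_mul,
      setIntegral_eq_of_subset_of_forall_sdiff_eq_zero measurableSet_Ioi Ioc_subset_Ioi_self
        fun s hs => by simp [hf s (not_le.1 fun h => hs.2 ⟨hs.1, h⟩)]]
    refine setIntegral_congr_fun measurableSet_Ioc fun s _ => ?_
    rw [show -(lam * (s - a)) = lam * a + -(lam * s) by ring, exp_add]
    ring
  · rw [intervalIntegral.integral_of_ge hBa.le,
      setIntegral_eq_zero_of_forall_eq_zero fun s hs => by simp [hf s (hBa.trans hs)],
      setIntegral_eq_zero_of_forall_eq_zero fun s hs => by simp [hf s hs.1]]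
    simp

theorem hasDerivAt_setIntegral_Ioi_mul_exp {f : ℝ → ℝ} (hf : Continuous f)
    (hfB : ∀ s, B < s → f s = 0) (a : ℝ) :
    HasDerivAt (fun b => ∫ s in Ioi b, f s * exp (-(lam * (s - b))))
      (lam * (∫ s in Ioi a, f s * exp (-(lam * (s - a)))) - f a) a := by
  have hfe : Continuous fun s => f s * exp (-(lam * s)) := by fun_prop
  have hI := intervalIntegral.integral_hasDerivAt_left (hfe.intervalIntegrable a B)
    (hfe.stronglyMeasurableAtFilter _ _) hfe.continuousAt
  have he : HasDerivAt (fun b => exp (lam * b)) (exp (lam * a) * lam) a := by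
    simpa using ((hasDerivAt_id a).const_mul lam).exp
  simp_rw [setIntegral_Ioi_mul_exp_eq hfB]
  refine (he.mul hI).congr_deriv ?_
  have hexp : exp (lam * a) * exp (-(lam * a)) = 1 := by rw [← exp_add, add_neg_cancel, exp_zero]
  linear_combination (-f a) * hexp

theorem continuousOn_setIntegral_Ioi_mul_exp {α : Type*} [TopologicalSpace α] {F : α → ℝ → ℝ}
    (hF : Continuous (uncurry F)) {S : Set α} (hFB : ∀ x ∈ S, ∀ s, B < s → F x s = 0) :
    ContinuousOn (fun p : α × ℝ => ∫ s in Ioi p.2, F p.1 s * exp (-(lam * (s - p.2))))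
      (S ×ˢ univ) := by
  have hFe : Continuous (uncurry fun (p : α × ℝ) s => F p.1 s * exp (-(lam * s))) :=
    (hF.comp (by fun_prop : Continuous fun z : (α × ℝ) × ℝ => (z.1.1, z.2))).mul (by fun_prop)
  have hcont : Continuous fun p : α × ℝ =>
      exp (lam * p.2) * -∫ s in B..p.2, F p.1 s * exp (-(lam * s)) :=
    (by fun_prop : Continuous fun p : α × ℝ => exp (lam * p.2)).mul
      (intervalIntegral.continuous_parametric_intervalIntegral_of_continuous hFe
        continuous_snd).neg
  refine hcont.continuousOn.congr fun p hp => ?_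
  rw [setIntegral_Ioi_mul_exp_eq (hFB _ hp.1), intervalIntegral.integral_symm]

end ExpTail

theorem exists_continuous_eq_integrand {xl xu : ℝ} (hxl : 0 < xl) (hxu : xl ≤ xu) {g : ℝ → ℝ}
    (hg : ContDiffOn ℝ 1 g (Icc xl (2 * xu))) (hgpos : ∀ x ∈ Icc xl (2 * xu), 0 < g x)
    {fl : ℝ → ℝ → ℝ} (hfl0 : ∀ x, fl 0 x = x)
    (hflderiv : ∀ a x, HasDerivAt (fun s => fl s x) (g (fl a x)) a)
    {q : ℝ → ℝ → ℝ} (hqcont : ContinuousOn (fun p : ℝ × ℝ => q p.1 p.2) (Icc xl xu ×ˢ univ))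
    {al au : ℝ → ℝ} (haucont : ContinuousOn au (Icc xl xu))
    (hbounds : ∀ x ∈ Icc xl xu, 0 < al x ∧ al x < au x)
    (hqzero : ∀ x ∈ Icc xl xu, ∀ a, a ∉ Ioo (al x) (au x) → q x a = 0)
    (hA5 : ∀ x ∈ Icc xl xu, xl ≤ fl (al x) x / 2 ∧ fl (au x) x / 2 ≤ xu)
    {vt : ℝ → ℝ} (hvtcont : ContinuousOn vt (Icc xl xu)) :
    ∃ F : ℝ → ℝ → ℝ, Continuous (uncurry F) ∧
      ∀ x ∈ Icc xl xu, ∀ s, F x s = 2 * q x s * vt (fl s x / 2) := by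
  have hxR : xl ≤ 2 * xu := by linarith
  have htraj : ∀ x ∈ Icc xl xu, ∀ t ∈ Icc 0 (au x), fl t x ∈ Icc xl (2 * xu) := fun x hx t ht =>
    flow_mem_Icc hflderiv (hgpos _ ⟨le_rfl, hxR⟩) (hgpos _ ⟨hxR, le_rfl⟩) (by rw [hfl0]; exact hx.1)
      (by linarith [(hA5 x hx).2]) ht
  have hS : ∀ x ∈ Icc xl xu, ∀ s ∈ Ioo (al x) (au x), fl s x / 2 ∈ Icc xl xu := fun x hx s hs => by
    have := flow_mem_Icc hflderiv (hgpos (2 * xl) ⟨by linarith, by linarith⟩)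
      (hgpos _ ⟨hxR, le_rfl⟩) (by linarith [(hA5 x hx).1]) (by linarith [(hA5 x hx).2])
      (Ioo_subset_Icc_self hs)
    constructor <;> linarith [this.1, this.2]
  obtain ⟨K, hK⟩ := hg.exists_lipschitzOnWith one_ne_zero (convex_Icc _ _) isCompact_Icc
  obtain ⟨M, hM⟩ := isCompact_Icc.exists_bound_of_continuousOn hg.continuousOn
  obtain ⟨B, hB⟩ := isCompact_Icc.bddAbove_image haucont
  refine exists_continuous_eq_mul_comp hxu haucont
    (fun x hx => (hbounds x hx).1.le.trans (hbounds x hx).2.le) (q := fun x s => 2 * q x s)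
    (continuousOn_const.mul hqcont : ContinuousOn (fun p : ℝ × ℝ => 2 * q p.1 p.2) _)
    ((continuousOn_flow hfl0 hflderiv hM hK (fun x hx => hB (mem_image_of_mem au hx))
      htraj).div_const 2) hvtcont fun x hx s hs => ?_
  have hs' : s ∈ Ioo (al x) (au x) := by_contra fun h => right_ne_zero_of_mul hs (hqzero x hx s h)
  exact ⟨⟨(hbounds x hx).1.le.trans hs'.1.le, hs'.2.le⟩, hS x hx s hs'⟩

theorem eigenfunction_of_adjoint_from_K_fixed_point_general
    (xl xu : ℝ) (hxl : 0 < xl) (hxu : xl < xu)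
    (g : ℝ → ℝ) (hg : ContDiffOn ℝ 1 g (Set.Icc xl (2 * xu)))
    (hgpos : ∀ x ∈ Set.Icc xl (2 * xu), 0 < g x)
    (fl : ℝ → ℝ → ℝ)
    (hfl0 : ∀ x, fl 0 x = x)
    (hflderiv : ∀ a x, HasDerivAt (fun s => fl s x) (g (fl a x)) a)
    (q : ℝ → ℝ → ℝ)
    (hqcont : ContinuousOn (fun p : ℝ × ℝ => q p.1 p.2) (Set.Icc xl xu ×ˢ Set.univ))
    (al au : ℝ → ℝ)
    (haucont : ContinuousOn au (Set.Icc xl xu))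
    (hbounds : ∀ x ∈ Set.Icc xl xu, 0 < al x ∧ al x < au x)
    (hqzero : ∀ x ∈ Set.Icc xl xu, ∀ a, a ∉ Set.Ioo (al x) (au x) → q x a = 0)
    (hA5 : ∀ x ∈ Set.Icc xl xu, xl ≤ fl (al x) x / 2 ∧ fl (au x) x / 2 ≤ xu)
    (X : Set (ℝ × ℝ))
    (hX : X = {p : ℝ × ℝ | xl ≤ p.1 ∧ p.1 ≤ xu ∧ 0 ≤ p.2 ∧ p.2 ≤ au p.1})
    -- `λ > 0` and a fixed point `ṽ` of `K_λ`
    (lam : ℝ)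
    (vt : ℝ → ℝ) (hvtcont : ContinuousOn vt (Set.Icc xl xu))
    (hvtfix : ∀ x ∈ Set.Icc xl xu,
      (∫ a in al x..au x, 2 * Real.exp (-(lam * a)) * q x a * vt (fl a x / 2)) = vt x)
    -- the function `v`
    (v : ℝ → ℝ → ℝ)
    (hv : ∀ x a, v x a
      = ∫ s in Set.Ioi a, 2 * q x s * vt (fl s x / 2) * Real.exp (-(lam * (s - a)))) :
    ContinuousOn (fun p : ℝ × ℝ => v p.1 p.2) X
    ∧ (∀ x ∈ Set.Icc xl xu, v x 0 = vt x)
    ∧ (∀ x ∈ Set.Icc xl xu, v x (au x) = 0)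
    ∧ (∀ x ∈ Set.Icc xl xu, ∀ a ∈ Set.Icc (0:ℝ) (au x),
        HasDerivAt (v x) (lam * v x a - 2 * q x a * vt (fl a x / 2)) a)
    ∧ ContinuousOn
        (fun p : ℝ × ℝ => lam * v p.1 p.2 - 2 * q p.1 p.2 * vt (fl p.2 p.1 / 2)) X := by
  obtain ⟨F, hFcont, hF⟩ := exists_continuous_eq_integrand hxl hxu.le hg hgpos hfl0 hflderiv
    hqcont haucont hbounds hqzero hA5 hvtcont
  obtain ⟨B, hB⟩ := isCompact_Icc.bddAbove_image haucont
  have hFB : ∀ x ∈ Icc xl xu, ∀ s, B < s → F x s = 0 := fun x hx s hs => by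
    rw [hF x hx, hqzero x hx s fun h => not_lt.2 (hB (mem_image_of_mem au hx)) (hs.trans h.2)]
    ring
  have hvF : ∀ x ∈ Icc xl xu, v x = fun a => ∫ s in Ioi a, F x s * exp (-(lam * (s - a))) :=
    fun x hx => funext fun a => by simp only [hv, hF x hx]
  have hXS : X ⊆ Icc xl xu ×ˢ univ := hX ▸ fun p hp => ⟨⟨hp.1, hp.2.1⟩, mem_univ _⟩
  have hvcont : ContinuousOn (fun p : ℝ × ℝ => v p.1 p.2) X :=
    ((continuousOn_setIntegral_Ioi_mul_exp hFcont hFB).mono hXS).congr fun p hp => by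
      rw [hvF p.1 (hXS hp).1]
  refine ⟨hvcont, fun x hx => ?_, fun x hx => ?_, fun x hx a _ => ?_, ?_⟩
  · rw [hv, ← hvtfix x hx, setIntegral_Ioi_eq_intervalIntegral_of_eq_zero (hbounds x hx).1.le
      (hbounds x hx).2.le fun s hs => by simp [hqzero x hx s hs]]
    congr 1 with s
    ring_nf
  · rw [hv]
    exact setIntegral_eq_zero_of_forall_eq_zero fun s hs => by
      simp [hqzero x hx s fun h => lt_asymm h.2 hs]
  · rw [hvF x hx, ← hF x hx a]
    exact hasDerivAt_setIntegral_Ioi_mul_exp (hFcont.comp (Continuous.prodMk_right x)) (hFB x hx) a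
  · refine ContinuousOn.congr (f := fun p => lam * v p.1 p.2 - uncurry F p)
      ((continuousOn_const.mul hvcont).sub hFcont.continuousOn) fun p hp => ?_
    simp only [uncurry, hF p.1 (hXS hp).1]

/-- (from a fixed point `ṽ` of `K_λ` one builds an eigenfunction `v` of the
adjoint generator: `v(x_b,a) = ∫_a^∞ 2 q(x_b,s) ṽ(S_s(x_b)) e^{-λ(s-a)} ds` satisfies
`λ v − ∂v/∂a = 2 q(x_b,a) ṽ(S_a(x_b))`, with `v(·,0) = ṽ` and `v(x_b, ā(x_b)) = 0`).
`fl r x` is the flow `π_r x` of `x' = g(x)`, `S_a(x) = fl a x / 2`. -/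
theorem eigenfunction_of_adjoint_from_K_fixed_point
    (xl xu : ℝ) (hxl : 0 < xl) (hxu : xl < xu)
    (g : ℝ → ℝ) (hg : ContDiffOn ℝ 1 g (Set.Icc xl (2 * xu)))
    (hgpos : ∀ x ∈ Set.Icc xl (2 * xu), 0 < g x)
    (fl : ℝ → ℝ → ℝ)
    (hfl0 : ∀ x, fl 0 x = x)
    (hflderiv : ∀ a x, HasDerivAt (fun s => fl s x) (g (fl a x)) a)
    (q : ℝ → ℝ → ℝ)
    (hqcont : ContinuousOn (fun p : ℝ × ℝ => q p.1 p.2) (Set.Icc xl xu ×ˢ Set.univ))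
    (hqnn : ∀ x a, 0 ≤ q x a)
    (al au : ℝ → ℝ)
    (halcont : ContinuousOn al (Set.Icc xl xu)) (haucont : ContinuousOn au (Set.Icc xl xu))
    (hbounds : ∀ x ∈ Set.Icc xl xu, 0 < al x ∧ al x < au x)
    (hqdens : ∀ x ∈ Set.Icc xl xu, ∫ a, q x a = 1)
    (hqpos : ∀ x ∈ Set.Icc xl xu, ∀ a ∈ Set.Ioo (al x) (au x), 0 < q x a)
    (hqzero : ∀ x ∈ Set.Icc xl xu, ∀ a, a ∉ Set.Ioo (al x) (au x) → q x a = 0)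
    (hA5 : ∀ x ∈ Set.Icc xl xu, xl ≤ fl (al x) x / 2 ∧ fl (au x) x / 2 ≤ xu)
    (X : Set (ℝ × ℝ))
    (hX : X = {p : ℝ × ℝ | xl ≤ p.1 ∧ p.1 ≤ xu ∧ 0 ≤ p.2 ∧ p.2 ≤ au p.1})
    -- `λ > 0` and a fixed point `ṽ` of `K_λ`
    (lam : ℝ) (hlam : 0 < lam)
    (vt : ℝ → ℝ) (hvtcont : ContinuousOn vt (Set.Icc xl xu))
    (hvtfix : ∀ x ∈ Set.Icc xl xu,
      (∫ a in al x..au x, 2 * Real.exp (-(lam * a)) * q x a * vt (fl a x / 2)) = vt x)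
    -- the function `v`
    (v : ℝ → ℝ → ℝ)
    (hv : ∀ x a, v x a
      = ∫ s in Set.Ioi a, 2 * q x s * vt (fl s x / 2) * Real.exp (-(lam * (s - a)))) :
    ContinuousOn (fun p : ℝ × ℝ => v p.1 p.2) X
    ∧ (∀ x ∈ Set.Icc xl xu, v x 0 = vt x)
    ∧ (∀ x ∈ Set.Icc xl xu, v x (au x) = 0)
    ∧ (∀ x ∈ Set.Icc xl xu, ∀ a ∈ Set.Icc (0:ℝ) (au x),
        HasDerivAt (v x) (lam * v x a - 2 * q x a * vt (fl a x / 2)) a)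
    ∧ ContinuousOn
        (fun p : ℝ × ℝ => lam * v p.1 p.2 - 2 * q p.1 p.2 * vt (fl p.2 p.1 / 2)) X :=
  eigenfunction_of_adjoint_from_K_fixed_point_general xl xu hxl hxu g hg hgpos fl hfl0 hflderiv q
    hqcont al au haucont hbounds hqzero hA5 X hX lam vt hvtcont hvtfix v hv
end

section
/- For every λ ≥ 0 and every ṽ ∈ C([x̲, x̄]), the operator K_λ can be written as an integral operator with continuous kernel: K_λ ṽ(x_b) = ∫_{x̲}^{x̄} k_λ(x_b, y) ṽ(y) dy, where k_λ(x_b, y) = 4 e^{−λ a(y; x_b)} q(x_b, a(y; x_b)) / g(2y) and a(y; x_b) = ∫_{x_b}^{2y} dr / g(r) (with the convention q(x_b, t) = 0 for t ≤ 0). -/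
/-!
Along a solution `φ` of `φ' = g ∘ φ` the travel time `∫_{φ a}^{φ b} dr / g(r)` equals `b - a`
(substitute `r = φ s`). Hence `a(½ π_a x; x) = a`, and the substitution `y = ½ π_a x` turns
`K_λ ṽ(x)` into `∫ k_λ(x, y) ṽ(y) dy` over `[½ π_{a̲(x)} x, ½ π_{ā(x)} x]`. Since the travel time
is increasing in `y`, outside this interval `a(y; x) ∉ (a̲(x), ā(x))`, where `q(x, ·)` vanishes,
so the integral extends to `[x̲, x̄]`. All of this takes place in `[x̲, 2x̄]`, where `g > 0`: a
solution can cross a level `c` with `g c > 0` only upwards, so the flow cannot leave that region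
between times `0` and `ā(x)`. Continuity of the kernel follows from that of the primitive of `1/g`.
-/

open MeasureTheory Set

theorem le_apply_of_hasDerivAt_comp {h g : ℝ → ℝ} {c t₀ t : ℝ}
    (hd : ∀ s, HasDerivAt h (g (h s)) s) (hc : 0 < g c) (h₀ : c ≤ h t₀) (ht : t₀ ≤ t) :
    c ≤ h t :=
  image_le_of_deriv_right_lt_deriv_boundary' continuousOn_const
    (fun _ _ => hasDerivWithinAt_const _ _ c) h₀
    (fun s _ => (hd s).continuousAt.continuousWithinAt)
    (fun s _ => (hd s).hasDerivWithinAt) (fun _ _ hs => hs ▸ hc) ⟨ht, le_rfl⟩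

theorem apply_le_of_hasDerivAt_comp {h g : ℝ → ℝ} {c t T : ℝ}
    (hd : ∀ s, HasDerivAt h (g (h s)) s) (hc : 0 < g c) (hT : h T ≤ c) (ht : t ≤ T) :
    h t ≤ c := by
  have hd' : ∀ s, HasDerivAt (fun s => -h (-s)) (g (-(-h (-s)))) s := fun s => by
    simpa using ((hd (-s)).comp s (hasDerivAt_neg s)).fun_neg
  simpa using le_apply_of_hasDerivAt_comp (g := fun y => g (-y)) hd' (c := -c)
    (by simpa using hc) (by simpa using hT) (neg_le_neg ht)

theorem mapsTo_Icc_of_hasDerivAt_comp {h g : ℝ → ℝ} {m M t₀ t₁ : ℝ}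
    (hd : ∀ s, HasDerivAt h (g (h s)) s) (hm : 0 < g m) (hM : 0 < g M) (h₀ : m ≤ h t₀)
    (h₁ : h t₁ ≤ M) : MapsTo h (Icc t₀ t₁) (Icc m M) :=
  fun _ ht => ⟨le_apply_of_hasDerivAt_comp hd hm h₀ ht.1, apply_le_of_hasDerivAt_comp hd hM h₁ ht.2⟩

theorem continuousOn_intervalIntegral_prod {f : ℝ → ℝ} {m M : ℝ}
    (hf : IntegrableOn f (Icc m M)) :
    ContinuousOn (fun p : ℝ × ℝ => ∫ r in p.1..p.2, f r) (Icc m M ×ˢ Icc m M) := by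
  rcases lt_or_ge M m with hMm | hmM
  · simp [Icc_eq_empty_of_lt hMm]
  rw [← uIcc_of_le hmM] at hf ⊢
  have hP := intervalIntegral.continuousOn_primitive_interval hf
  refine ((hP.comp continuous_snd.continuousOn fun p hp => hp.2).sub
    (hP.comp continuous_fst.continuousOn fun p hp => hp.1)).congr fun p hp => ?_
  exact (intervalIntegral.integral_interval_sub_left
    (hf.mono_set (uIcc_subset_uIcc left_mem_uIcc hp.2)).intervalIntegrable
    (hf.mono_set (uIcc_subset_uIcc left_mem_uIcc hp.1)).intervalIntegrable).symm

theorem integral_le_integral_of_le_right {f : ℝ → ℝ} {m M u v w : ℝ}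
    (hf : IntegrableOn f (Icc m M)) (hf0 : ∀ r ∈ Icc m M, 0 ≤ f r) (hu : u ∈ Icc m M)
    (hv : v ∈ Icc m M) (hw : w ∈ Icc m M) (hvw : v ≤ w) :
    ∫ r in u..v, f r ≤ ∫ r in u..w, f r := by
  rw [← sub_nonneg, intervalIntegral.integral_interval_sub_left
    (hf.mono_set (uIcc_subset_Icc hu hw)).intervalIntegrable
    (hf.mono_set (uIcc_subset_Icc hu hv)).intervalIntegrable]
  exact intervalIntegral.integral_nonneg hvw fun r hr => hf0 r ⟨hv.1.trans hr.1, hr.2.trans hw.2⟩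

theorem integral_one_div_eq_sub_of_hasDerivAt_comp {g φ : ℝ → ℝ} {s : Set ℝ} {a b : ℝ}
    (hg : ContinuousOn g s) (hg0 : ∀ r ∈ s, g r ≠ 0)
    (hφ : ∀ t ∈ uIcc a b, HasDerivAt φ (g (φ t)) t) (hmaps : MapsTo φ (uIcc a b) s) :
    ∫ r in φ a..φ b, 1 / g r = b - a := by
  have hφc : ContinuousOn φ (uIcc a b) := fun t ht => (hφ t ht).continuousAt.continuousWithinAt
  have hinv : ContinuousOn (fun r => 1 / g r) s := continuousOn_const.div hg hg0
  rw [← intervalIntegral.integral_comp_mul_deriv'' hφc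
    (fun t ht => (hφ t (Ioo_subset_Icc_self ht)).hasDerivWithinAt) (hg.comp hφc hmaps)
    (hinv.mono hmaps.image_subset), ← integral_one]
  refine intervalIntegral.integral_congr fun t ht => ?_
  simp [hg0 _ (hmaps ht)]

theorem integral_eq_integral_of_eqOn_zero {E : Type*} [NormedAddCommGroup E] [NormedSpace ℝ E]
    {F : ℝ → E} {a b c d : ℝ} (hF : IntegrableOn F (Icc a d)) (hb : b ∈ Icc a d)
    (hc : c ∈ Icc a d) (h₁ : EqOn F 0 (Icc a b)) (h₂ : EqOn F 0 (Icc c d)) :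
    ∫ x in b..c, F x = ∫ x in a..d, F x := by
  have hI : ∀ {u v}, u ∈ Icc a d → v ∈ Icc a d → IntervalIntegrable F volume u v :=
    fun hu hv => (hF.mono_set (uIcc_subset_Icc hu hv)).intervalIntegrable
  have ha : a ∈ Icc a d := ⟨le_rfl, hb.1.trans hb.2⟩
  have hd : d ∈ Icc a d := ⟨hb.1.trans hb.2, le_rfl⟩
  rw [← intervalIntegral.integral_add_adjacent_intervals (hI ha hb) (hI hb hd),
    ← intervalIntegral.integral_add_adjacent_intervals (hI hb hc) (hI hc hd),
    intervalIntegral.integral_congr (a := a) (uIcc_of_le hb.1 ▸ h₁),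
    intervalIntegral.integral_congr (a := c) (uIcc_of_le hc.2 ▸ h₂)]
  simp

/-- The kernel `k_λ`; `∫ r in x..(2 * y), 1 / g r` is the travel time `a(y; x)`. -/
noncomputable def divisionKernel (g : ℝ → ℝ) (q : ℝ → ℝ → ℝ) (lam x y : ℝ) : ℝ :=
  4 * Real.exp (-(lam * ∫ r in x..(2 * y), 1 / g r)) * q x (∫ r in x..(2 * y), 1 / g r)
    / g (2 * y)

theorem continuousOn_divisionKernel {g : ℝ → ℝ} {q : ℝ → ℝ → ℝ} {lam xl xu : ℝ} (hxl : 0 ≤ xl)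
    (hg : ContinuousOn g (Icc xl (2 * xu))) (hg0 : ∀ r ∈ Icc xl (2 * xu), g r ≠ 0)
    (hq : ContinuousOn (fun p : ℝ × ℝ => q p.1 p.2) (Icc xl xu ×ˢ univ)) :
    ContinuousOn (fun p : ℝ × ℝ => divisionKernel g q lam p.1 p.2) (Icc xl xu ×ˢ Icc xl xu) := by
  have hmaps : MapsTo (fun p : ℝ × ℝ => (p.1, 2 * p.2)) (Icc xl xu ×ˢ Icc xl xu)
      (Icc xl (2 * xu) ×ˢ Icc xl (2 * xu)) := by
    rintro ⟨x, y⟩ ⟨⟨hx1, hx2⟩, hy1, hy2⟩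
    dsimp only at *
    exact ⟨⟨hx1, by linarith⟩, by linarith, by linarith⟩
  have hinv : ContinuousOn (fun r => 1 / g r) (Icc xl (2 * xu)) := continuousOn_const.div hg hg0
  have htime : ContinuousOn (fun p : ℝ × ℝ => ∫ r in p.1..(2 * p.2), 1 / g r)
      (Icc xl xu ×ˢ Icc xl xu) :=
    (continuousOn_intervalIntegral_prod (hinv.integrableOn_compact isCompact_Icc)).comp
      (by fun_prop) hmaps
  have hq' : ContinuousOn (fun p : ℝ × ℝ => q p.1 (∫ r in p.1..(2 * p.2), 1 / g r))
      (Icc xl xu ×ˢ Icc xl xu) :=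
    hq.comp (continuous_fst.continuousOn.prodMk htime) fun p hp => ⟨hp.1, trivial⟩
  have hg' : ContinuousOn (fun p : ℝ × ℝ => g (2 * p.2)) (Icc xl xu ×ˢ Icc xl xu) :=
    hg.comp (by fun_prop) fun p hp => (hmaps hp).2
  exact ((continuousOn_const.mul (htime.const_smul lam).neg.rexp).mul hq').div hg'
    fun p hp => hg0 _ ((hmaps hp).2)

theorem mul_divisionKernel_half {g : ℝ → ℝ} {q : ℝ → ℝ → ℝ} {lam x z a : ℝ}
    (hz : ∫ r in x..z, 1 / g r = a) (hgz : g z ≠ 0) :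
    g z / 2 * divisionKernel g q lam x (z / 2) = 2 * Real.exp (-(lam * a)) * q x a := by
  rw [divisionKernel, show 2 * (z / 2) = z by ring, hz]
  field_simp
  ring

theorem integral_flow_eq_integral_divisionKernel {g φ v : ℝ → ℝ} {q : ℝ → ℝ → ℝ}
    {lam x α β : ℝ} (hαβ : α ≤ β) (hφ : ∀ t, HasDerivAt φ (g (φ t)) t)
    (hg : ContinuousOn g (φ '' Icc α β)) (hg0 : ∀ a ∈ Icc α β, g (φ a) ≠ 0)
    (htime : ∀ a ∈ Icc α β, ∫ r in x..φ a, 1 / g r = a)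
    (hF : ContinuousOn (fun y => divisionKernel g q lam x y * v y)
      ((fun a => φ a / 2) '' Icc α β)) :
    ∫ a in α..β, 2 * Real.exp (-(lam * a)) * q x a * v (φ a / 2)
      = ∫ y in φ α / 2..φ β / 2, divisionKernel g q lam x y * v y := by
  have hφc : Continuous φ := continuous_iff_continuousAt.2 fun t => (hφ t).continuousAt
  rw [← intervalIntegral.integral_comp_mul_deriv'' (hφc.div_const 2).continuousOn
    (fun a _ => ((hφ a).div_const 2).hasDerivWithinAt)
    (f' := fun a => g (φ a) / 2) (by simpa [uIcc_of_le hαβ] using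
      (hg.comp hφc.continuousOn (mapsTo_image φ _)).div_const 2)
    (by simpa [uIcc_of_le hαβ] using hF)]
  refine intervalIntegral.integral_congr fun a ha => ?_
  rw [uIcc_of_le hαβ] at ha
  rw [Function.comp_apply, ← mul_divisionKernel_half (htime a ha) (hg0 a ha)]
  ring

theorem integral_flow_eq_integral_Icc_divisionKernel {g φ v : ℝ → ℝ} {q : ℝ → ℝ → ℝ}
    {lam xl xu x α β : ℝ} (hxl : 0 ≤ xl) (hg : ContinuousOn g (Icc xl (2 * xu)))
    (hg0 : ∀ r ∈ Icc xl (2 * xu), 0 < g r) (hφ : ∀ t, HasDerivAt φ (g (φ t)) t)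
    (hφ0 : φ 0 = x) (hx : x ∈ Icc xl xu) (hα : 0 ≤ α) (hαβ : α ≤ β)
    (hφα : xl ≤ φ α / 2) (hφβ : φ β / 2 ≤ xu) (hq : ∀ t ∉ Ioo α β, q x t = 0)
    (hF : ContinuousOn (fun y => divisionKernel g q lam x y * v y) (Icc xl xu)) :
    ∫ a in α..β, 2 * Real.exp (-(lam * a)) * q x a * v (φ a / 2)
      = ∫ y in xl..xu, divisionKernel g q lam x y * v y := by
  obtain ⟨hxlx, hxxu⟩ := hx
  have hregion : MapsTo φ (Icc 0 β) (Icc xl (2 * xu)) :=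
    mapsTo_Icc_of_hasDerivAt_comp hφ (hg0 _ ⟨le_rfl, by linarith⟩) (hg0 _ ⟨by linarith, le_rfl⟩)
      (hφ0 ▸ hxlx) (by linarith)
  have hregion' : MapsTo φ (Icc α β) (Icc (2 * xl) (2 * xu)) :=
    mapsTo_Icc_of_hasDerivAt_comp hφ (hg0 _ ⟨by linarith, by linarith⟩)
      (hg0 _ ⟨by linarith, le_rfl⟩) (by linarith) (by linarith)
  have hsub : Icc α β ⊆ Icc 0 β := Icc_subset_Icc_left hα
  have htime : ∀ a ∈ Icc 0 β, ∫ r in x..φ a, 1 / g r = a := fun a ha => by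
    simpa [hφ0] using integral_one_div_eq_sub_of_hasDerivAt_comp hg (fun r hr => (hg0 r hr).ne')
      (fun t _ => hφ t) (hregion.mono_left (uIcc_subset_Icc ⟨le_rfl, ha.1.trans ha.2⟩ ha))
  have hmono : ∀ {u w}, u ∈ Icc xl (2 * xu) → w ∈ Icc xl (2 * xu) → u ≤ w →
      ∫ r in x..u, 1 / g r ≤ ∫ r in x..w, 1 / g r :=
    integral_le_integral_of_le_right
      ((continuousOn_const.div hg fun r hr => (hg0 r hr).ne').integrableOn_compact isCompact_Icc)
      (fun r hr => (one_div_pos.2 (hg0 r hr)).le) ⟨hxlx, by linarith⟩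
  have hvanish : ∀ y, ∫ r in x..(2 * y), 1 / g r ∉ Ioo α β →
      divisionKernel g q lam x y * v y = 0 := fun y h => by
    simp only [divisionKernel, hq _ h, mul_zero, zero_div, zero_mul]
  have hφα_le : φ α ≤ 2 * xu := (hregion' ⟨le_rfl, hαβ⟩).2
  have hφβ_ge : 2 * xl ≤ φ β := (hregion' ⟨hαβ, le_rfl⟩).1
  rw [integral_flow_eq_integral_divisionKernel hαβ hφ
    (hg.mono (hregion.mono_left hsub).image_subset) (fun a ha => (hg0 _ (hregion (hsub ha))).ne')
    (fun a ha => htime a (hsub ha)) (hF.mono ?_)]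
  · refine integral_eq_integral_of_eqOn_zero (hF.integrableOn_compact isCompact_Icc)
      ⟨hφα, by linarith⟩ ⟨by linarith, hφβ⟩ (fun y hy => hvanish y fun h => ?_)
      (fun y hy => hvanish y fun h => ?_)
    · have := hmono (u := 2 * y) ⟨by linarith [hy.1], by linarith [hy.2]⟩ (hregion ⟨hα, hαβ⟩)
        (by linarith [hy.2])
      linarith [h.1, htime α ⟨hα, hαβ⟩]
    · have := hmono (w := 2 * y) (hregion ⟨hα.trans hαβ, le_rfl⟩)
        ⟨by linarith [hy.1], by linarith [hy.2]⟩ (by linarith [hy.1])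
      linarith [h.2, htime β ⟨hα.trans hαβ, le_rfl⟩]
  · rintro _ ⟨a, ha, rfl⟩
    exact ⟨by linarith [(hregion' ha).1], by linarith [(hregion' ha).2]⟩

theorem K_is_integral_operator_with_continuous_kernel_general
    (xl xu : ℝ) (hxl : 0 < xl)
    (g : ℝ → ℝ) (hg : ContDiffOn ℝ 1 g (Set.Icc xl (2 * xu)))
    (hgpos : ∀ x ∈ Set.Icc xl (2 * xu), 0 < g x)
    (fl : ℝ → ℝ → ℝ)
    (hfl0 : ∀ x, fl 0 x = x)
    (hflderiv : ∀ a x, HasDerivAt (fun s => fl s x) (g (fl a x)) a)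
    (q : ℝ → ℝ → ℝ)
    (hqcont : ContinuousOn (fun p : ℝ × ℝ => q p.1 p.2) (Set.Icc xl xu ×ˢ Set.univ))
    (al au : ℝ → ℝ)
    (hbounds : ∀ x ∈ Set.Icc xl xu, 0 < al x ∧ al x < au x)
    (hqzero : ∀ x ∈ Set.Icc xl xu, ∀ a, a ∉ Set.Ioo (al x) (au x) → q x a = 0)
    (hA5 : ∀ x ∈ Set.Icc xl xu, xl ≤ fl (al x) x / 2 ∧ fl (au x) x / 2 ≤ xu)
    (lam : ℝ)
    -- the kernel `k_λ`
    (k : ℝ → ℝ → ℝ)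
    (hk : ∀ x y, k x y
      = 4 * Real.exp (-(lam * ∫ r in x..(2 * y), 1 / g r))
          * q x (∫ r in x..(2 * y), 1 / g r) / g (2 * y)) :
    ContinuousOn (fun p : ℝ × ℝ => k p.1 p.2) (Set.Icc xl xu ×ˢ Set.Icc xl xu)
    ∧ ∀ vt : ℝ → ℝ, ContinuousOn vt (Set.Icc xl xu) →
        ∀ x ∈ Set.Icc xl xu,
          (∫ a in al x..au x, 2 * Real.exp (-(lam * a)) * q x a * vt (fl a x / 2))
            = ∫ y in xl..xu, k x y * vt y := by
  obtain rfl : k = divisionKernel g q lam := funext₂ fun x y => hk x y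
  have hkcont := continuousOn_divisionKernel (lam := lam) hxl.le hg.continuousOn
    (fun r hr => (hgpos r hr).ne') hqcont
  refine ⟨hkcont, fun vt hvt x hx => ?_⟩
  obtain ⟨hal, halau⟩ := hbounds x hx
  exact integral_flow_eq_integral_Icc_divisionKernel hxl.le hg.continuousOn hgpos (hflderiv · x)
    (hfl0 x) hx hal.le halau.le (hA5 x hx).1 (hA5 x hx).2 (hqzero x hx)
    ((hkcont.comp (Continuous.prodMk_right x).continuousOn fun y hy => ⟨hx, hy⟩).mul hvt)

/-- `K_λ` is an integral operator with the continuous kernel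
`k_λ(x_b,y) = 4 e^{-λ a(y;x_b)} q(x_b, a(y;x_b)) / g(2y)`, where
`a(y;x_b) = ∫_{x_b}^{2y} dr/g(r)`.  `fl r x` is the flow `π_r x` of `x' = g(x)`. -/
theorem K_is_integral_operator_with_continuous_kernel
    (xl xu : ℝ) (hxl : 0 < xl) (hxu : xl < xu)
    (g : ℝ → ℝ) (hg : ContDiffOn ℝ 1 g (Set.Icc xl (2 * xu)))
    (hgpos : ∀ x ∈ Set.Icc xl (2 * xu), 0 < g x)
    (fl : ℝ → ℝ → ℝ)
    (hfl0 : ∀ x, fl 0 x = x)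
    (hflderiv : ∀ a x, HasDerivAt (fun s => fl s x) (g (fl a x)) a)
    (q : ℝ → ℝ → ℝ)
    (hqcont : ContinuousOn (fun p : ℝ × ℝ => q p.1 p.2) (Set.Icc xl xu ×ˢ Set.univ))
    (hqnn : ∀ x a, 0 ≤ q x a)
    (al au : ℝ → ℝ)
    (halcont : ContinuousOn al (Set.Icc xl xu)) (haucont : ContinuousOn au (Set.Icc xl xu))
    (hbounds : ∀ x ∈ Set.Icc xl xu, 0 < al x ∧ al x < au x)
    (hqdens : ∀ x ∈ Set.Icc xl xu, ∫ a, q x a = 1)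
    (hqpos : ∀ x ∈ Set.Icc xl xu, ∀ a ∈ Set.Ioo (al x) (au x), 0 < q x a)
    (hqzero : ∀ x ∈ Set.Icc xl xu, ∀ a, a ∉ Set.Ioo (al x) (au x) → q x a = 0)
    (hA5 : ∀ x ∈ Set.Icc xl xu, xl ≤ fl (al x) x / 2 ∧ fl (au x) x / 2 ≤ xu)
    (lam : ℝ) (hlam : 0 ≤ lam)
    -- the kernel `k_λ`
    (k : ℝ → ℝ → ℝ)
    (hk : ∀ x y, k x y
      = 4 * Real.exp (-(lam * ∫ r in x..(2 * y), 1 / g r))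
          * q x (∫ r in x..(2 * y), 1 / g r) / g (2 * y)) :
    ContinuousOn (fun p : ℝ × ℝ => k p.1 p.2) (Set.Icc xl xu ×ˢ Set.Icc xl xu)
    ∧ ∀ vt : ℝ → ℝ, ContinuousOn vt (Set.Icc xl xu) →
        ∀ x ∈ Set.Icc xl xu,
          (∫ a in al x..au x, 2 * Real.exp (-(lam * a)) * q x a * vt (fl a x / 2))
            = ∫ y in xl..xu, k x y * vt y :=
  K_is_integral_operator_with_continuous_kernel_general xl xu hxl g hg hgpos fl hfl0 hflderiv q
    hqcont al au hbounds hqzero hA5 lam k hk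
end

section
/- Assume additionally that g(2x) = 2 g(x) for every x with x, 2x ∈ [x̲, 2x̄]. Fix t > 0 and x_b, and assume that all flows below remain in [x̲, 2x̄]. Then the function a ↦ π_{t−a}(½ π_a x_b) is constant on [0, t]; in particular π_{t−a}(½ π_a x_b) = ½ π_t x_b for every a ∈ [0, t]. (Biologically: the size at time t of a daughter cell is exactly half the size the mother would have at time t, independently of the division age a.) -/
/-!
Both `r ↦ π_r (x / 2)` and `r ↦ π_r x / 2` start at `x / 2`; the first solves `y' = g y`, the
second `y' = g (2 y) / 2`. By the homogeneity of `g` the two fields agree wherever both curves can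
be at once, so they glue to one Lipschitz field solved by both curves, and uniqueness of ODE
solutions gives `π_s (x / 2) = π_s x / 2`. With `x = π_a x_b`, `s = t - a` and the semigroup law
`π_{t-a} π_a = π_t` this is the claim.
-/

open Set

/-- Equal to `g` on `[lo, ∞)` and, when `g (2 lo) = 2 g lo`, to `y ↦ g (2 y) / 2` on `(-∞, lo]`;
written with `max`/`min` so that it is visibly Lipschitz. -/
noncomputable def halvingExtension (g : ℝ → ℝ) (lo y : ℝ) : ℝ :=
  g (max y lo) + (g (2 * min y lo) - g (2 * lo)) / 2

section
variable {g : ℝ → ℝ} {lo hi y : ℝ}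

lemma halvingExtension_of_le (h : lo ≤ y) : halvingExtension g lo y = g y := by
  simp [halvingExtension, max_eq_left h, min_eq_right h]

lemma halvingExtension_half (hlo : 0 ≤ lo) (hlohi : 2 * lo ≤ hi)
    (hg2 : ∀ x, x ∈ Icc lo hi → 2 * x ∈ Icc lo hi → g (2 * x) = 2 * g x) (hy : y ∈ Icc lo hi) :
    halvingExtension g lo (y / 2) = g y / 2 := by
  rcases le_total lo (y / 2) with h | h
  · have := hg2 (y / 2) ⟨h, by linarith [hy.2]⟩ (by rwa [mul_div_cancel₀ _ two_ne_zero])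
    rw [mul_div_cancel₀ _ two_ne_zero] at this
    rw [halvingExtension_of_le h, this]
    ring
  · have := hg2 lo ⟨le_rfl, by linarith⟩ ⟨by linarith, hlohi⟩
    rw [halvingExtension, max_eq_right h, min_eq_left h, mul_div_cancel₀ _ two_ne_zero, this]
    ring

lemma lipschitzOnWith_halvingExtension {K : NNReal} (hg : LipschitzOnWith K g (Icc lo hi))
    (hlo : 0 ≤ lo) (hlohi : 2 * lo ≤ hi) :
    LipschitzOnWith (2 * K) (halvingExtension g lo) (Icc (lo / 2) hi) := by
  have hmax : ∀ y ∈ Icc (lo / 2) hi, max y lo ∈ Icc lo hi := fun y hy =>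
    ⟨le_max_right _ _, max_le hy.2 (by linarith)⟩
  have hmin : ∀ y ∈ Icc (lo / 2) hi, 2 * min y lo ∈ Icc lo hi := fun y hy =>
    ⟨by linarith [le_min hy.1 (by linarith : lo / 2 ≤ lo)], by linarith [min_le_right y lo]⟩
  refine LipschitzOnWith.of_dist_le_mul fun y hy z hz => ?_
  have hmax_le := hg.dist_le_mul _ (hmax y hy) _ (hmax z hz)
  have hmin_le := hg.dist_le_mul _ (hmin y hy) _ (hmin z hz)
  have hdmax : dist (max y lo) (max z lo) ≤ dist y z := abs_max_sub_max_le_abs y z lo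
  have hdmin : dist (2 * min y lo) (2 * min z lo) ≤ 2 * dist y z := by
    simpa [Real.dist_eq, ← mul_sub, abs_mul] using abs_min_sub_min_le_max y lo z lo
  calc dist (halvingExtension g lo y) (halvingExtension g lo z)
      = |g (max y lo) - g (max z lo) + (g (2 * min y lo) - g (2 * min z lo)) / 2| := by
        rw [Real.dist_eq, halvingExtension, halvingExtension]; ring_nf
    _ ≤ dist (g (max y lo)) (g (max z lo)) + dist (g (2 * min y lo)) (g (2 * min z lo)) / 2 := by
        rw [Real.dist_eq, Real.dist_eq, ← abs_two, ← abs_div, abs_two]; exact abs_add_le _ _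
    _ ≤ K * dist y z + K * (2 * dist y z) / 2 := by
        gcongr
        · exact hmax_le.trans (by gcongr)
        · exact hmin_le.trans (by gcongr)
    _ = (2 * K : NNReal) * dist y z := by push_cast; ring

theorem flow_half_eq_half_flow {K : NNReal} (hlo : 0 ≤ lo)
    (hg : LipschitzOnWith K g (Icc lo hi))
    (hg2 : ∀ x, x ∈ Icc lo hi → 2 * x ∈ Icc lo hi → g (2 * x) = 2 * g x)
    {fl : ℝ → ℝ → ℝ} (hfl0 : ∀ x, fl 0 x = x)
    (hflderiv : ∀ a x, HasDerivAt (fun s => fl s x) (g (fl a x)) a)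
    {x s : ℝ} (hs : 0 ≤ s) (hx : ∀ r ∈ Icc 0 s, fl r x ∈ Icc lo hi)
    (hx2 : ∀ r ∈ Icc 0 s, fl r (x / 2) ∈ Icc lo hi) :
    fl s (x / 2) = fl s x / 2 := by
  have hs0 : (0 : ℝ) ∈ Icc 0 s := ⟨le_rfl, hs⟩
  have hlohi : 2 * lo ≤ hi := by
    have h1 := hx 0 hs0
    have h2 := hx2 0 hs0
    rw [hfl0] at h1 h2
    linarith [h1.2, h2.1]
  have hsub : Icc lo hi ⊆ Icc (lo / 2) hi := Icc_subset_Icc_left (by linarith)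
  refine ODE_solution_unique_of_mem_Icc_right (v := fun _ => halvingExtension g lo)
    (s := fun _ => Icc (lo / 2) hi) (fun _ _ => lipschitzOnWith_halvingExtension hg hlo hlohi)
    (f := fun r => fl r (x / 2)) (g := fun r => fl r x / 2)
    (fun r _ => (hflderiv r _).continuousAt.continuousWithinAt) ?_
    (fun r hr => hsub (hx2 r (Ico_subset_Icc_self hr)))
    (fun r _ => ((hflderiv r x).div_const 2).continuousAt.continuousWithinAt) ?_
    ?_ (by simp [hfl0]) ⟨hs, le_rfl⟩
  · intro r hr
    rw [halvingExtension_of_le (hx2 r (Ico_subset_Icc_self hr)).1]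
    exact (hflderiv r _).hasDerivWithinAt
  · intro r hr
    rw [halvingExtension_half hlo hlohi hg2 (hx r (Ico_subset_Icc_self hr))]
    exact ((hflderiv r x).div_const 2).hasDerivWithinAt
  · intro r hr
    have := hx r (Ico_subset_Icc_self hr)
    exact ⟨by linarith [this.1], by linarith [this.2]⟩

end

theorem daughter_size_constant_when_g_two_homogeneous_general
    (xl xu : ℝ) (hxl : 0 < xl)
    (g : ℝ → ℝ) (hg : ContDiff ℝ 1 g)
    (fl : ℝ → ℝ → ℝ)
    (hfl0 : ∀ x, fl 0 x = x)
    (hfladd : ∀ s t x, fl s (fl t x) = fl (s + t) x)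
    (hflderiv : ∀ a x, HasDerivAt (fun s => fl s x) (g (fl a x)) a)
    -- `g(2x) = 2 g(x)` whenever `x` and `2x` lie in `[x̲, 2x̄]`
    (hg2 : ∀ x, x ∈ Set.Icc xl (2 * xu) → 2 * x ∈ Set.Icc xl (2 * xu) → g (2 * x) = 2 * g x)
    (t : ℝ) (xb : ℝ)
    -- all the flows involved remain in `[x̲, 2x̄]`
    (hdom1 : ∀ a ∈ Set.Icc (0:ℝ) t, fl a xb ∈ Set.Icc xl (2 * xu))
    (hdom2 : ∀ a ∈ Set.Icc (0:ℝ) t, ∀ s ∈ Set.Icc (0:ℝ) (t - a),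
      fl s (fl a xb / 2) ∈ Set.Icc xl (2 * xu)) :
    ∀ a ∈ Set.Icc (0:ℝ) t, fl (t - a) (fl a xb / 2) = fl t xb / 2 := by
  intro a ha
  obtain ⟨K, hK⟩ := hg.contDiffOn.exists_lipschitzOnWith one_ne_zero (convex_Icc xl (2 * xu))
    isCompact_Icc
  have hmother : ∀ r ∈ Icc 0 (t - a), fl r (fl a xb) ∈ Icc xl (2 * xu) := fun r hr => by
    rw [hfladd]
    exact hdom1 _ ⟨by linarith [hr.1, ha.1], by linarith [hr.2]⟩
  rw [flow_half_eq_half_flow hxl.le hK hg2 hfl0 hflderiv (sub_nonneg.2 ha.2) hmother (hdom2 a ha),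
    hfladd, sub_add_cancel]

/-- if `g(2x) = 2g(x)` then the size at time `t` of a daughter cell,
`π_{t-a}(½ π_a x_b)`, does not depend on the division age `a ∈ [0,t]` and equals `½ π_t x_b`.
`fl r x` is the flow `π_r x` of `x' = g(x)`. -/
theorem daughter_size_constant_when_g_two_homogeneous
    (xl xu : ℝ) (hxl : 0 < xl) (hxu : xl < xu)
    (g : ℝ → ℝ) (hg : ContDiff ℝ 1 g)
    (hgpos : ∀ x ∈ Set.Icc xl (2 * xu), 0 < g x)
    (fl : ℝ → ℝ → ℝ)
    (hfl0 : ∀ x, fl 0 x = x)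
    (hfladd : ∀ s t x, fl s (fl t x) = fl (s + t) x)
    (hflderiv : ∀ a x, HasDerivAt (fun s => fl s x) (g (fl a x)) a)
    -- `g(2x) = 2 g(x)` whenever `x` and `2x` lie in `[x̲, 2x̄]`
    (hg2 : ∀ x, x ∈ Set.Icc xl (2 * xu) → 2 * x ∈ Set.Icc xl (2 * xu) → g (2 * x) = 2 * g x)
    (t : ℝ) (ht : 0 < t) (xb : ℝ) (hxb : xb ∈ Set.Icc xl xu)
    -- all the flows involved remain in `[x̲, 2x̄]`
    (hdom1 : ∀ a ∈ Set.Icc (0:ℝ) t, fl a xb ∈ Set.Icc xl (2 * xu))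
    (hdom2 : ∀ a ∈ Set.Icc (0:ℝ) t, ∀ s ∈ Set.Icc (0:ℝ) (t - a),
      fl s (fl a xb / 2) ∈ Set.Icc xl (2 * xu)) :
    ∀ a ∈ Set.Icc (0:ℝ) t, fl (t - a) (fl a xb / 2) = fl t xb / 2 :=
  daughter_size_constant_when_g_two_homogeneous_general xl xu hxl g hg fl hfl0 hfladd hflderiv hg2 t
    xb hdom1 hdom2
end
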